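/- arXiv:2509.16392 — 3 statements merged into one kernel-verified Lean document; each statement's English description precedes it below -/
import Mathlib

section
/- Let (Z_h)_{h≥0} be a sequence of positive real numbers satisfying Z_{h+1} ≤ K b^h (Z_h^{1+μ₁} + Z_h^{1+μ₂}) for all h = 0,1,2,…, where K > 0, b > 1 and μ₂ ≥ μ₁ > 0. Suppose that either Z₀ ≤ min{1, (2K)^{−1/μ₁} b^{−1/μ₁²}} or Z₀ ≤ min{(2K)^{−1/μ₁} b^{−1/μ₁²}, (2K)^{−1/μ₂} b^{−1/(μ₁μ₂) − (μ₂−μ₁)/μ₂²}}. Then there exists an index h₀ ∈ {0,1,2,…} such that Z_h ≤ 1 for all h ≥ h₀, and moreover Z_h ≤ min{1, (2K)^{−1/μ₁} b^{−1/μ₁²} b^{−h/μ₁}} for all h ≥ h₀. In particular Z_h → 0 as h → ∞. -/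
open Filter

/-- Lemma 4.1 (Ho–Sim geometric convergence with two exponents). -/
theorem stmt_4 (Z : ℕ → ℝ) (hZ : ∀ h : ℕ, 0 < Z h)
    (K b μ₁ μ₂ : ℝ) (hK : 0 < K) (hb : 1 < b) (hμ₁ : 0 < μ₁) (hμ : μ₁ ≤ μ₂)
    (hrec : ∀ h : ℕ, Z (h + 1) ≤ K * b ^ h * (Z h ^ (1 + μ₁) + Z h ^ (1 + μ₂)))
    (h0 : Z 0 ≤ min 1 ((2 * K) ^ (-(1 / μ₁)) * b ^ (-(1 / μ₁ ^ 2))) ∨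
          Z 0 ≤ min ((2 * K) ^ (-(1 / μ₁)) * b ^ (-(1 / μ₁ ^ 2)))
                    ((2 * K) ^ (-(1 / μ₂)) * b ^ (-(1 / (μ₁ * μ₂)) - (μ₂ - μ₁) / μ₂ ^ 2))) :
    (∃ h₀ : ℕ, (∀ h : ℕ, h₀ ≤ h → Z h ≤ 1) ∧
      ∀ h : ℕ, h₀ ≤ h →
        Z h ≤ min 1 ((2 * K) ^ (-(1 / μ₁)) * b ^ (-(1 / μ₁ ^ 2)) * b ^ (-(h : ℝ) / μ₁))) ∧
    Tendsto Z atTop (nhds 0) := by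
  have hμ₂ : 0 < μ₂ := lt_of_lt_of_le hμ₁ hμ
  have hb0 : (0:ℝ) < b := lt_trans one_pos hb
  have h2K : (0:ℝ) < 2 * K := by positivity
  set c : ℝ := (2 * K) ^ (-(1 / μ₁)) * b ^ (-(1 / μ₁ ^ 2)) with hc
  set d : ℝ := (2 * K) ^ (-(1 / μ₂)) * b ^ (-(1 / (μ₁ * μ₂)) - (μ₂ - μ₁) / μ₂ ^ 2) with hd
  have hc0 : 0 < c := by positivity
  have hd0 : 0 < d := by positivity
  have hmul : ∀ x : ℝ, 0 < x → ∀ p q : ℝ, (x ^ p) ^ q = x ^ (p * q) :=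
    fun x hx p q => (Real.rpow_mul hx.le p q).symm
  -- key algebraic identities
  have hck : 2 * K * c ^ μ₁ = b ^ (-(1 / μ₁)) := by
    rw [hc, Real.mul_rpow (by positivity) (by positivity), hmul _ h2K, hmul _ hb0,
      show -(1 / μ₁) * μ₁ = -1 by field_simp,
      show -(1 / μ₁ ^ 2) * μ₁ = -(1 / μ₁) by field_simp,
      Real.rpow_neg_one]
    field_simp
  have hdk : 2 * K * d ^ μ₂ = b ^ (-(1 / μ₁) - (μ₂ - μ₁) / μ₂) := by
    rw [hd, Real.mul_rpow (by positivity) (by positivity), hmul _ h2K, hmul _ hb0,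
      show -(1 / μ₂) * μ₂ = -1 by field_simp,
      show (-(1 / (μ₁ * μ₂)) - (μ₂ - μ₁) / μ₂ ^ 2) * μ₂ = -(1 / μ₁) - (μ₂ - μ₁) / μ₂ by
        field_simp,
      Real.rpow_neg_one]
    field_simp
  -- generic step
  have main : ∀ (h : ℕ) (μ E e : ℝ), 0 < μ → 0 < E →
      2 * K * E ^ μ = b ^ e →
      Z (h + 1) ≤ 2 * K * b ^ h * Z h ^ (1 + μ) →
      Z h ≤ E * b ^ (-(h : ℝ) / μ) →
      Z (h + 1) ≤ b ^ e * Z h := by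
    intro h μ E e hμ0 hE0 hKE hrec' hZE
    have hZh := hZ h
    have hbh : (b : ℝ) ^ h * b ^ (-(h : ℝ)) = 1 := by
      rw [← Real.rpow_natCast b h, ← Real.rpow_add hb0]
      simp
    calc Z (h + 1) ≤ 2 * K * b ^ h * Z h ^ (1 + μ) := hrec'
      _ = (2 * K * b ^ h * Z h ^ μ) * Z h := by
          rw [Real.rpow_add hZh, Real.rpow_one]; ring
      _ ≤ (2 * K * b ^ h * (E * b ^ (-(h : ℝ) / μ)) ^ μ) * Z h := by
          gcongr
      _ = (2 * K * E ^ μ) * (b ^ h * b ^ (-(h : ℝ))) * Z h := by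
          rw [Real.mul_rpow hE0.le (by positivity), hmul _ hb0,
            show -(h : ℝ) / μ * μ = -(h : ℝ) by field_simp]
          try ring
      _ = b ^ e * Z h := by rw [hKE, hbh, mul_one]
  -- reductions of the recurrence
  have red1 : ∀ h : ℕ, Z h ≤ 1 → Z (h + 1) ≤ 2 * K * b ^ h * Z h ^ (1 + μ₁) := by
    intro h h1
    have : Z h ^ (1 + μ₂) ≤ Z h ^ (1 + μ₁) :=
      Real.rpow_le_rpow_of_exponent_ge (hZ h) h1 (by linarith)
    calc Z (h + 1) ≤ K * b ^ h * (Z h ^ (1 + μ₁) + Z h ^ (1 + μ₂)) := hrec h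
      _ ≤ K * b ^ h * (Z h ^ (1 + μ₁) + Z h ^ (1 + μ₁)) := by gcongr
      _ = 2 * K * b ^ h * Z h ^ (1 + μ₁) := by ring
  have red2 : ∀ h : ℕ, 1 ≤ Z h → Z (h + 1) ≤ 2 * K * b ^ h * Z h ^ (1 + μ₂) := by
    intro h h1
    have : Z h ^ (1 + μ₁) ≤ Z h ^ (1 + μ₂) :=
      Real.rpow_le_rpow_of_exponent_le h1 (by linarith)
    calc Z (h + 1) ≤ K * b ^ h * (Z h ^ (1 + μ₁) + Z h ^ (1 + μ₂)) := hrec h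
      _ ≤ K * b ^ h * (Z h ^ (1 + μ₂) + Z h ^ (1 + μ₂)) := by gcongr
      _ = 2 * K * b ^ h * Z h ^ (1 + μ₂) := by ring
  -- combining exponentials
  have comb : ∀ (μ : ℝ), μ ≠ 0 → ∀ h : ℕ,
      b ^ (-(1 / μ)) * b ^ (-(h : ℝ) / μ) = b ^ (-((h + 1 : ℕ) : ℝ) / μ) := by
    intro μ hμ0 h
    rw [← Real.rpow_add hb0]
    congr 1
    push_cast
    ring
  -- the main invariant
  have inv : ∀ h : ℕ, Z h ≤ c * b ^ (-(h : ℝ) / μ₁) ∧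
      (Z h ≤ 1 ∨ Z h ≤ d * b ^ (-(h : ℝ) / μ₂)) := by
    intro h
    induction h with
    | zero =>
        simp only [Nat.cast_zero, neg_zero, zero_div, Real.rpow_zero, mul_one]
        rcases h0 with h | h
        · exact ⟨(le_min_iff.mp h).2, Or.inl (le_min_iff.mp h).1⟩
        · exact ⟨(le_min_iff.mp h).1, Or.inr (le_min_iff.mp h).2⟩
    | succ h ih =>
        obtain ⟨ih1, ih2⟩ := ih
        rcases le_or_gt (Z h) 1 with hle | hgt
        · have hs := main h μ₁ c (-(1 / μ₁)) hμ₁ hc0 hck (red1 h hle) ih1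
          have hble : b ^ (-(1 / μ₁)) ≤ 1 :=
            Real.rpow_le_one_of_one_le_of_nonpos hb.le (by rw [neg_nonpos]; positivity)
          constructor
          · calc Z (h + 1) ≤ b ^ (-(1 / μ₁)) * Z h := hs
              _ ≤ b ^ (-(1 / μ₁)) * (c * b ^ (-(h : ℝ) / μ₁)) :=
                  mul_le_mul_of_nonneg_left ih1 (Real.rpow_pos_of_pos hb0 _).le
              _ = c * b ^ (-((h + 1 : ℕ) : ℝ) / μ₁) := by
                  rw [← mul_assoc, mul_comm (b ^ (-(1 / μ₁))) c, mul_assoc,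
                    comb μ₁ hμ₁.ne' h]
          · left
            calc Z (h + 1) ≤ b ^ (-(1 / μ₁)) * Z h := hs
              _ ≤ 1 * 1 := mul_le_mul hble hle (hZ h).le zero_le_one
              _ = 1 := mul_one 1
        · have hZd : Z h ≤ d * b ^ (-(h : ℝ) / μ₂) := ih2.resolve_left (not_le.mpr hgt)
          have hs := main h μ₂ d (-(1 / μ₁) - (μ₂ - μ₁) / μ₂) hμ₂ hd0 hdk
            (red2 h hgt.le) hZd
          have he1 : -(1 / μ₁) - (μ₂ - μ₁) / μ₂ ≤ -(1 / μ₁) := by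
            have : 0 ≤ (μ₂ - μ₁) / μ₂ := div_nonneg (by linarith) hμ₂.le
            linarith
          have he2 : -(1 / μ₁) - (μ₂ - μ₁) / μ₂ ≤ -(1 / μ₂) := by
            have h1 : 1 / μ₂ ≤ 1 / μ₁ := one_div_le_one_div_of_le hμ₁ hμ
            have h2 : 0 ≤ (μ₂ - μ₁) / μ₂ := div_nonneg (by linarith) hμ₂.le
            linarith
          constructor
          · calc Z (h + 1) ≤ b ^ (-(1 / μ₁) - (μ₂ - μ₁) / μ₂) * Z h := hs
              _ ≤ b ^ (-(1 / μ₁)) * (c * b ^ (-(h : ℝ) / μ₁)) :=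
                  mul_le_mul (Real.rpow_le_rpow_of_exponent_le hb.le he1) ih1
                    (hZ h).le (Real.rpow_pos_of_pos hb0 _).le
              _ = c * b ^ (-((h + 1 : ℕ) : ℝ) / μ₁) := by
                  rw [← mul_assoc, mul_comm (b ^ (-(1 / μ₁))) c, mul_assoc,
                    comb μ₁ hμ₁.ne' h]
          · right
            calc Z (h + 1) ≤ b ^ (-(1 / μ₁) - (μ₂ - μ₁) / μ₂) * Z h := hs
              _ ≤ b ^ (-(1 / μ₂)) * (d * b ^ (-(h : ℝ) / μ₂)) :=
                  mul_le_mul (Real.rpow_le_rpow_of_exponent_le hb.le he2) hZd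
                    (hZ h).le (Real.rpow_pos_of_pos hb0 _).le
              _ = d * b ^ (-((h + 1 : ℕ) : ℝ) / μ₂) := by
                  rw [← mul_assoc, mul_comm (b ^ (-(1 / μ₂))) d, mul_assoc,
                    comb μ₂ hμ₂.ne' h]
  -- the bound tends to zero
  have hr1 : b ^ (-(1 : ℝ) / μ₁) < 1 :=
    Real.rpow_lt_one_of_one_lt_of_neg hb
      (by rw [neg_div]; exact neg_neg_of_pos (by positivity))
  have hbound : Tendsto (fun h : ℕ => c * b ^ (-(h : ℝ) / μ₁)) atTop (nhds 0) := by
    have heq : ∀ h : ℕ, c * b ^ (-(h : ℝ) / μ₁) = c * (b ^ (-(1 : ℝ) / μ₁)) ^ h := by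
      intro h
      rw [← Real.rpow_natCast (b ^ (-(1 : ℝ) / μ₁)) h, hmul _ hb0]
      congr 2
      ring
    simp only [heq]
    have := tendsto_pow_atTop_nhds_zero_of_lt_one (by positivity) hr1
    simpa using this.const_mul c
  -- pick h₀
  obtain ⟨h₀, hh₀⟩ := (hbound.eventually_lt_const one_pos).exists_forall_of_atTop
  have hkey : ∀ h : ℕ, h₀ ≤ h → Z h ≤ 1 ∧ Z h ≤ c * b ^ (-(h : ℝ) / μ₁) := by
    intro h hh
    refine ⟨?_, (inv h).1⟩
    calc Z h ≤ c * b ^ (-(h : ℝ) / μ₁) := (inv h).1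
      _ ≤ c * b ^ (-(h₀ : ℝ) / μ₁) := by
          have hcast : (h₀ : ℝ) ≤ (h : ℝ) := by exact_mod_cast hh
          have : -(h : ℝ) / μ₁ ≤ -(h₀ : ℝ) / μ₁ := by
            rw [div_le_div_iff_of_pos_right hμ₁]
            linarith
          exact mul_le_mul_of_nonneg_left
            (Real.rpow_le_rpow_of_exponent_le hb.le this) hc0.le
      _ ≤ 1 := (hh₀ h₀ le_rfl).le
  constructor
  · exact ⟨h₀, fun h hh => (hkey h hh).1,
      fun h hh => le_min (hkey h hh).1 (hkey h hh).2⟩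
  · refine squeeze_zero (fun h => (hZ h).le) (fun h => (inv h).1) hbound
end

section
/- Let n ≥ 2 and let G(x,t) = ∫₀^{|t|} g(x,s) ds be a generalized N-function on ℝⁿ satisfying: (G0) with constants 1 < g⁻ ≤ g⁺ < n; (G1) there exists F ≥ 1 with F^{-1} ≤ G(x,1) ≤ F for a.e. x; and (G2) there exists μ ∈ (0,1] such that μ G^{-1}(x,t) ≤ G^{-1}(y,t) for every ball B ⊂ ℝⁿ with |B| ≤ 1, every t ∈ [1, 1/|B|] and a.e. x, y ∈ B, where G^{-1}(x,·) is the inverse of G(x,·) on [0,∞). Define N(x,t) := (∫₀^t (τ/G(x,τ))^{1/(n−1)} dτ)^{(n−1)/n} and the Sobolev conjugate G*(x,t) := G(x, N^{-1}(x,t)), where N^{-1}(x,·) is the inverse of N(x,·) on [0,∞). Set g*⁻ := n g⁻/(n − g⁻) and g*⁺ := n g⁺/(n − g⁺). Then for a.e. x ∈ ℝⁿ and all s, t ≥ 0 one has min{s^{g*⁻}, s^{g*⁺}} G*(x,t) ≤ G*(x, s t) ≤ max{s^{g*⁻}, s^{g*⁺}} G*(x,t). -/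
open MeasureTheory Set Filter

noncomputable section

/-- A generalized N-function `G` on `Ω ⊆ ℝⁿ`, with `g x` the right derivative of `G x`. -/
structure IsGenNFunction {n : ℕ} (Ω : Set (EuclideanSpace ℝ (Fin n)))
    (G : EuclideanSpace ℝ (Fin n) → ℝ → ℝ)
    (g : EuclideanSpace ℝ (Fin n) → ℝ → ℝ) : Prop where
  measurable_in_x : ∀ t : ℝ, Measurable fun x => G x t
  ae_props : ∀ᵐ x ∂(volume.restrict Ω),
      (∀ t : ℝ, G x (-t) = G x t)
    ∧ ContinuousOn (G x) (Ici 0)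
    ∧ MonotoneOn (G x) (Ici 0)
    ∧ ConvexOn ℝ (Ici 0) (G x)
    ∧ G x 0 = 0
    ∧ (∀ t : ℝ, 0 < t → 0 < G x t)
    ∧ Tendsto (fun t => G x t / t) (nhdsWithin 0 (Ioi 0)) (nhds 0)
    ∧ Tendsto (fun t => G x t / t) atTop atTop
    ∧ (∀ t : ℝ, G x t = ∫ s in (0:ℝ)..|t|, g x s)
    ∧ g x 0 = 0
    ∧ (∀ t : ℝ, 0 < t → 0 < g x t)
    ∧ (∀ t : ℝ, g x (-t) = - g x t)
    ∧ MonotoneOn (g x) (Ici 0)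

/-- The auxiliary function `N(x,t) = (∫₀^t (τ/G(x,τ))^{1/(n−1)} dτ)^{(n−1)/n}`
used to define the Sobolev conjugate `G*(x,t) = G(x, N⁻¹(x,t))`. -/
noncomputable def sobolevAux (n : ℕ) (G : EuclideanSpace ℝ (Fin n) → ℝ → ℝ)
    (x : EuclideanSpace ℝ (Fin n)) (t : ℝ) : ℝ :=
  (∫ τ in (0:ℝ)..t, (τ / G x τ) ^ ((1:ℝ) / ((n :ℝ) - 1))) ^ (((n : ℝ) - 1) / (n : ℝ))

namespace Stmt12Aux

open Topology

variable {G g : ℝ → ℝ}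

lemma sub_eq_integral (hrep : ∀ t, 0 < t → G t = ∫ s in (0:ℝ)..t, g s)
    (hgint : ∀ a b : ℝ, IntervalIntegrable g volume a b)
    {x z : ℝ} (hx : 0 < x) (hz : x < z) :
    G z - G x = ∫ s in x..z, g s := by
  rw [hrep x hx, hrep z (hx.trans hz)]
  exact intervalIntegral.integral_interval_sub_left (hgint 0 z) (hgint 0 x)

lemma slope_le_right (hrep : ∀ t, 0 < t → G t = ∫ s in (0:ℝ)..t, g s)
    (hgint : ∀ a b : ℝ, IntervalIntegrable g volume a b)
    (hgmono : Monotone g)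
    {x z : ℝ} (hx : 0 < x) (hz : x < z) :
    slope G x z ≤ g z := by
  rw [slope_def_field, div_le_iff₀ (by linarith : (0:ℝ) < z - x)]
  rw [sub_eq_integral hrep hgint hx hz]
  have h1 : ∫ s in x..z, g s ≤ ∫ s in x..z, g z :=
    intervalIntegral.integral_mono_on hz.le (hgint x z) intervalIntegrable_const
      (fun τ hτ => hgmono hτ.2)
  simpa [smul_eq_mul, mul_comm] using h1

lemma slope_ge_left (hrep : ∀ t, 0 < t → G t = ∫ s in (0:ℝ)..t, g s)
    (hgint : ∀ a b : ℝ, IntervalIntegrable g volume a b)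
    (hgmono : Monotone g)
    {x z : ℝ} (hx : 0 < x) (hz : x < z) :
    g x ≤ slope G x z := by
  rw [slope_def_field, le_div_iff₀ (by linarith : (0:ℝ) < z - x)]
  rw [sub_eq_integral hrep hgint hx hz]
  have h1 : ∫ s in x..z, g x ≤ ∫ s in x..z, g s :=
    intervalIntegral.integral_mono_on hz.le intervalIntegrable_const (hgint x z)
      (fun τ hτ => hgmono hτ.1)
  simpa [smul_eq_mul, mul_comm] using h1

lemma hasDerivAt_rpow_aux {a q x : ℝ} (ha : 0 < a) (hx : 0 < x) (c : ℝ) :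
    HasDerivAt (fun y : ℝ => (y / a) ^ q * c) (q * ((x / a) ^ q * c) / x) x := by
  have h1 : HasDerivAt (fun y : ℝ => y / a) (1 / a) x := (hasDerivAt_id x).div_const a
  have h2 : HasDerivAt (fun y : ℝ => (y / a) ^ q) (1 / a * q * (x / a) ^ (q - 1)) x :=
    h1.rpow_const (Or.inl (by positivity))
  have h3 := h2.mul_const c
  refine h3.congr_deriv ?_
  have hxa : (0:ℝ) < x / a := by positivity
  rw [Real.rpow_sub hxa, Real.rpow_one]
  field_simp

lemma scale_upper
    (hGc : ContinuousOn G (Ici 0))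
    (hGpos : ∀ t, 0 < t → 0 < G t)
    (hrep : ∀ t, 0 < t → G t = ∫ s in (0:ℝ)..t, g s)
    (hgint : ∀ a b : ℝ, IntervalIntegrable g volume a b)
    (hgmono : Monotone g)
    {gp : ℝ} (hgp : 0 < gp)
    (hub : ∀ t, 0 < t → g t ≤ gp * G t / t) :
    ∀ a b : ℝ, 0 < a → a ≤ b → G b ≤ (b / a) ^ gp * G a := by
  intro a b ha hab
  have key : ∀ q, gp < q → G b ≤ (b / a) ^ q * G a := by
    intro q hq
    have main := image_le_of_liminf_slope_right_lt_deriv_boundary'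
      (f := G) (f' := fun x => gp * G x / x) (a := a) (b := b)
      (B := fun x => (x / a) ^ q * G a)
      (B' := fun x => q * ((x / a) ^ q * G a) / x)
      (hGc.mono (fun x hx => ha.le.trans hx.1))
      (by
        intro x hx r hr
        have hx0 : 0 < x := ha.trans_le hx.1
        have hcont : ContinuousAt G x := hGc.continuousAt (Ici_mem_nhds hx0)
        have htend : Tendsto (fun z => gp * G z / z) (𝓝[>] x) (𝓝 (gp * G x / x)) :=
          tendsto_nhdsWithin_of_tendsto_nhds
            (((continuousAt_const.mul hcont).div continuousAt_id hx0.ne').tendsto)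
        have ev1 : ∀ᶠ z in 𝓝[>] x, gp * G z / z < r := htend (Iio_mem_nhds hr)
        have ev2 : ∀ᶠ z in 𝓝[>] x, slope G x z < r := by
          filter_upwards [ev1, self_mem_nhdsWithin] with z h1 (h2 : x < z)
          exact lt_of_le_of_lt
            ((slope_le_right hrep hgint hgmono hx0 h2).trans (hub z (hx0.trans h2))) h1
        exact ev2.frequently)
      (by
        show G a ≤ (a / a) ^ q * G a
        rw [div_self ha.ne', Real.one_rpow, one_mul])
      (fun x hx => (hasDerivAt_rpow_aux ha (ha.trans_le hx.1) (G a)).continuousAt.continuousWithinAt)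
      (fun x hx => (hasDerivAt_rpow_aux ha (ha.trans_le hx.1) (G a)).hasDerivWithinAt)
      (by
        intro x hx hcontact
        have hx0 : 0 < x := ha.trans_le hx.1
        have hcontact2 : G x = (x / a) ^ q * G a := hcontact
        show gp * G x / x < q * ((x / a) ^ q * G a) / x
        rw [← hcontact2]
        have hGx : 0 < G x := hGpos x hx0
        exact div_lt_div_of_pos_right (mul_lt_mul_of_pos_right hq hGx) hx0)
    exact main ⟨hab, le_rfl⟩
  have hba : (0:ℝ) < b / a := div_pos (ha.trans_le hab) ha
  have hc : Continuous fun q : ℝ => (b / a) ^ q * G a := by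
    have heq : (fun q : ℝ => (b / a) ^ q * G a)
        = fun q => Real.exp (Real.log (b / a) * q) * G a := by
      funext q; rw [Real.rpow_def_of_pos hba]
    rw [heq]
    exact (Real.continuous_exp.comp (continuous_const.mul continuous_id)).mul continuous_const
  have htend : Tendsto (fun q : ℝ => (b / a) ^ q * G a) (𝓝[>] gp)
      (𝓝 ((b / a) ^ gp * G a)) :=
    tendsto_nhdsWithin_of_tendsto_nhds hc.continuousAt.tendsto
  exact ge_of_tendsto htend (eventually_mem_nhdsWithin.mono fun q hq => key q hq)

lemma scale_lower
    (hGc : ContinuousOn G (Ici 0))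
    (hGpos : ∀ t, 0 < t → 0 < G t)
    (hrep : ∀ t, 0 < t → G t = ∫ s in (0:ℝ)..t, g s)
    (hgint : ∀ a b : ℝ, IntervalIntegrable g volume a b)
    (hgmono : Monotone g)
    {gm : ℝ} (hgm : 0 < gm)
    (hlb : ∀ t, 0 < t → gm * G t / t ≤ g t) :
    ∀ a b : ℝ, 0 < a → a ≤ b → (b / a) ^ gm * G a ≤ G b := by
  intro a b ha hab
  have key : ∀ q, 0 < q → q < gm → (b / a) ^ q * G a ≤ G b := by
    intro q hq0 hq
    have main := image_le_of_liminf_slope_right_lt_deriv_boundary'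
      (f := fun x => -G x) (f' := fun x => -(gm * G x / x)) (a := a) (b := b)
      (B := fun x => -((x / a) ^ q * G a))
      (B' := fun x => -(q * ((x / a) ^ q * G a) / x))
      ((hGc.mono (fun x hx => ha.le.trans hx.1)).neg)
      (by
        intro x hx r hr
        have hx0 : 0 < x := ha.trans_le hx.1
        have ev2 : ∀ᶠ z in 𝓝[>] x, slope (fun y => -G y) x z < r := by
          filter_upwards [self_mem_nhdsWithin] with z (h2 : x < z)
          have h3 : g x ≤ slope G x z := slope_ge_left hrep hgint hgmono hx0 h2
          have h4 : gm * G x / x ≤ g x := hlb x hx0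
          have h5 : slope (fun y => -G y) x z = -slope G x z := by
            simp [slope_def_field, neg_sub, ← neg_div, neg_sub_neg]
            ring_nf
          rw [h5]
          calc -slope G x z ≤ -(gm * G x / x) := by linarith
          _ < r := hr
        exact ev2.frequently)
      (by
        show -G a ≤ -((a / a) ^ q * G a)
        rw [div_self ha.ne', Real.one_rpow, one_mul])
      (fun x hx => ((hasDerivAt_rpow_aux ha (ha.trans_le hx.1) (G a)).neg).continuousAt.continuousWithinAt)
      (fun x hx => ((hasDerivAt_rpow_aux ha (ha.trans_le hx.1) (G a)).neg).hasDerivWithinAt)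
      (by
        intro x hx hcontact
        have hx0 : 0 < x := ha.trans_le hx.1
        have hGx : 0 < G x := hGpos x hx0
        have hcontact2 : -G x = -((x / a) ^ q * G a) := hcontact
        have hcontact' : (x / a) ^ q * G a = G x := by linarith
        show -(gm * G x / x) < -(q * ((x / a) ^ q * G a) / x)
        rw [hcontact', neg_lt_neg_iff]
        exact div_lt_div_of_pos_right (mul_lt_mul_of_pos_right hq hGx) hx0)
    have := main ⟨hab, le_rfl⟩
    simpa using this
  have hba : (0:ℝ) < b / a := div_pos (ha.trans_le hab) ha
  have hc : Continuous fun q : ℝ => (b / a) ^ q * G a := by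
    have heq : (fun q : ℝ => (b / a) ^ q * G a)
        = fun q => Real.exp (Real.log (b / a) * q) * G a := by
      funext q; rw [Real.rpow_def_of_pos hba]
    rw [heq]
    exact (Real.continuous_exp.comp (continuous_const.mul continuous_id)).mul continuous_const
  have htend : Tendsto (fun q : ℝ => (b / a) ^ q * G a) (𝓝[<] gm)
      (𝓝 ((b / a) ^ gm * G a)) :=
    tendsto_nhdsWithin_of_tendsto_nhds hc.continuousAt.tendsto
  apply le_of_tendsto htend
  filter_upwards [Ioo_mem_nhdsLT_of_mem (⟨half_lt_self hgm, le_rfl⟩ : gm ∈ Ioc (gm/2) gm)]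
    with q hq
  exact key q (lt_trans (half_pos hgm) hq.1) hq.2



/-- integrand of `sobolevAux` -/
def ff (p : ℝ) (G : ℝ → ℝ) (τ : ℝ) : ℝ := (τ / G τ) ^ ((1:ℝ) / (p - 1))

def AA (p : ℝ) (G : ℝ → ℝ) (t : ℝ) : ℝ := ∫ τ in (0:ℝ)..t, ff p G τ

def NN (p : ℝ) (G : ℝ → ℝ) (t : ℝ) : ℝ := AA p G t ^ ((p - 1) / p)

variable {p gm gp : ℝ}

lemma ff_nonneg (hGpos : ∀ t, 0 < t → 0 < G t) {τ : ℝ} (hτ : 0 ≤ τ) :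
    0 ≤ ff p G τ := by
  apply Real.rpow_nonneg
  rcases eq_or_lt_of_le hτ with h | h
  · rw [← h, zero_div]
  · exact (div_pos h (hGpos τ h)).le

lemma ff_pos (hGpos : ∀ t, 0 < t → 0 < G t) {τ : ℝ} (hτ : 0 < τ) :
    0 < ff p G τ :=
  Real.rpow_pos_of_pos (div_pos hτ (hGpos τ hτ)) _

lemma ff_zero (hp : 2 ≤ p) : ff p G 0 = 0 := by
  have h1 : (0:ℝ) < p - 1 := by linarith
  have h2 : (1:ℝ) / (p - 1) ≠ 0 := by positivity
  rw [ff, zero_div, Real.zero_rpow h2]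

lemma ff_cont (hGc : ContinuousOn G (Ici 0)) (hGpos : ∀ t, 0 < t → 0 < G t) :
    ContinuousOn (ff p G) (Ioi 0) := by
  apply ContinuousOn.rpow_const
  · exact continuousOn_id.div (hGc.mono (fun x hx => mem_Ici.mpr (le_of_lt hx)))
      (fun τ hτ => (hGpos τ hτ).ne')
  · exact fun τ hτ => Or.inl (ne_of_gt (div_pos hτ (hGpos τ hτ)))

lemma ff_int (hp : 2 ≤ p) (hgp0 : 0 < gp) (hgpn : gp < p)
    (hGc : ContinuousOn G (Ici 0)) (hGpos : ∀ t, 0 < t → 0 < G t)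
    (hscu : ∀ t, 0 < t → ∀ s, 1 ≤ s → G (s * t) ≤ s ^ gp * G t)
    {t : ℝ} (ht : 0 < t) :
    IntervalIntegrable (ff p G) volume 0 t := by
  have hp1 : (0:ℝ) < p - 1 := by linarith
  set k := (1:ℝ)/(p-1) with hk
  have hk0 : 0 < k := by positivity
  set e := (1 - gp) * k with he
  have he1 : -1 < e := by
    rw [he, hk, mul_one_div, lt_div_iff₀ hp1]; linarith
  set C := (t ^ gp / G t) ^ k with hC
  have hint : IntervalIntegrable (fun τ => C * τ ^ e) volume 0 t :=
    (intervalIntegral.intervalIntegrable_rpow' he1).const_mul C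
  have hIoc : Set.uIoc (0:ℝ) t = Ioc 0 t := uIoc_of_le ht.le
  apply IntervalIntegrable.mono_fun' hint
  · rw [hIoc]
    exact ((ff_cont hGc hGpos).mono Ioc_subset_Ioi_self).aestronglyMeasurable measurableSet_Ioc
  · rw [hIoc]
    filter_upwards [ae_restrict_mem measurableSet_Ioc] with τ hτ
    have hτ0 : 0 < τ := hτ.1
    rw [Real.norm_eq_abs, abs_of_nonneg (ff_nonneg hGpos hτ0.le)]
    have hts : 1 ≤ t / τ := (le_div_iff₀ hτ0).mpr (by linarith [hτ.2])
    have h1 : G t ≤ (t/τ) ^ gp * G τ := by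
      have := hscu τ hτ0 (t/τ) hts
      rwa [div_mul_cancel₀ t hτ0.ne'] at this
    have h2 : τ / G τ ≤ τ * (t/τ) ^ gp / G t := by
      rw [div_le_div_iff₀ (hGpos τ hτ0) (hGpos t ht)]
      calc τ * G t ≤ τ * ((t/τ) ^ gp * G τ) := mul_le_mul_of_nonneg_left h1 hτ0.le
        _ = τ * (t/τ) ^ gp * G τ := by ring
    have h3 : τ * (t/τ) ^ gp / G t = (t ^ gp / G t) * τ ^ ((1:ℝ) - gp) := by
      rw [Real.div_rpow ht.le hτ0.le, Real.rpow_sub hτ0, Real.rpow_one]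
      have h4 : (0:ℝ) < τ ^ gp := Real.rpow_pos_of_pos hτ0 gp
      have h5 : G t ≠ 0 := (hGpos t ht).ne'
      field_simp
    calc ff p G τ ≤ (τ * (t/τ) ^ gp / G t) ^ k := by
          apply Real.rpow_le_rpow (div_nonneg hτ0.le (hGpos τ hτ0).le) h2 hk0.le
      _ = C * τ ^ e := by
          rw [h3, Real.mul_rpow (div_nonneg (Real.rpow_nonneg ht.le _) (hGpos t ht).le) (Real.rpow_nonneg hτ0.le _),
            ← Real.rpow_mul hτ0.le]

lemma AA_nonneg (hGpos : ∀ t, 0 < t → 0 < G t) {t : ℝ} (ht : 0 ≤ t) : 0 ≤ AA p G t :=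
  intervalIntegral.integral_nonneg ht (fun τ hτ => ff_nonneg hGpos hτ.1)

lemma AA_pos (hp : 2 ≤ p) (hgp0 : 0 < gp) (hgpn : gp < p)
    (hGc : ContinuousOn G (Ici 0)) (hGpos : ∀ t, 0 < t → 0 < G t)
    (hscu : ∀ t, 0 < t → ∀ s, 1 ≤ s → G (s * t) ≤ s ^ gp * G t)
    {t : ℝ} (ht : 0 < t) : 0 < AA p G t :=
  intervalIntegral.intervalIntegral_pos_of_pos_on
    (ff_int hp hgp0 hgpn hGc hGpos hscu ht) (fun τ hτ => ff_pos hGpos hτ.1) ht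

lemma AA_zero : AA p G 0 = 0 := intervalIntegral.integral_same

lemma AA_mono (hp : 2 ≤ p) (hgp0 : 0 < gp) (hgpn : gp < p)
    (hGc : ContinuousOn G (Ici 0)) (hGpos : ∀ t, 0 < t → 0 < G t)
    (hscu : ∀ t, 0 < t → ∀ s, 1 ≤ s → G (s * t) ≤ s ^ gp * G t)
    {t₁ t₂ : ℝ} (ht₁ : 0 ≤ t₁) (h12 : t₁ ≤ t₂) : AA p G t₁ ≤ AA p G t₂ := by
  rcases eq_or_lt_of_le ht₁ with h | h
  · rw [← h, AA_zero]
    exact AA_nonneg hGpos (le_trans ht₁ h12)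
  · have ht₂ : 0 < t₂ := lt_of_lt_of_le h h12
    have hsub := intervalIntegral.integral_interval_sub_left
      (ff_int hp hgp0 hgpn hGc hGpos hscu ht₂) (ff_int hp hgp0 hgpn hGc hGpos hscu h)
    have hnn : 0 ≤ ∫ τ in t₁..t₂, ff p G τ :=
      intervalIntegral.integral_nonneg h12 (fun τ hτ => ff_nonneg hGpos (le_trans h.le hτ.1))
    have : AA p G t₂ - AA p G t₁ = ∫ τ in t₁..t₂, ff p G τ := hsub
    linarith

lemma AA_scale (hp : 2 ≤ p) (hgm1 : 1 < gm) (hgmp : gm ≤ gp) (hgpn : gp < p)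
    (hGc : ContinuousOn G (Ici 0)) (hGpos : ∀ t, 0 < t → 0 < G t)
    (hsc : ∀ t, 0 < t → ∀ s, 1 ≤ s → s ^ gm * G t ≤ G (s * t) ∧ G (s * t) ≤ s ^ gp * G t)
    {t : ℝ} (ht : 0 < t) {s : ℝ} (hs : 1 ≤ s) :
    s ^ ((p - gp)/(p - 1)) * AA p G t ≤ AA p G (s * t) ∧
      AA p G (s * t) ≤ s ^ ((p - gm)/(p - 1)) * AA p G t := by
  have hs0 : (0:ℝ) < s := lt_of_lt_of_le one_pos hs
  have hp1 : (0:ℝ) < p - 1 := by linarith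
  have hgp0 : (0:ℝ) < gp := by linarith
  set k := (1:ℝ)/(p-1) with hk
  have hk0 : 0 < k := by positivity
  have hscu : ∀ t, 0 < t → ∀ s, 1 ≤ s → G (s * t) ≤ s ^ gp * G t :=
    fun t ht s hs => (hsc t ht s hs).2
  have hst : 0 < s * t := mul_pos hs0 ht
  -- substitution
  have hcomp : (∫ τ in (0:ℝ)..t, ff p G (s * τ)) = s⁻¹ * AA p G (s * t) := by
    rw [intervalIntegral.integral_comp_mul_left (ff p G) hs0.ne']
    rw [mul_zero, smul_eq_mul]
    rfl
  -- pointwise bounds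
  have hpt : ∀ τ ∈ Icc (0:ℝ) t,
      s ^ ((1 - gp) * k) * ff p G τ ≤ ff p G (s * τ) ∧
      ff p G (s * τ) ≤ s ^ ((1 - gm) * k) * ff p G τ := by
    intro τ hτ
    rcases eq_or_lt_of_le hτ.1 with h0 | h0
    · rw [← h0, mul_zero, ff_zero hp]
      simp
    · obtain ⟨hl, hu⟩ := hsc τ h0 s hs
      have hGτ : 0 < G τ := hGpos τ h0
      have hGsτ : 0 < G (s * τ) := hGpos (s*τ) (mul_pos hs0 h0)
      have hsgm : (0:ℝ) < s ^ gm := Real.rpow_pos_of_pos hs0 gm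
      have hsgp : (0:ℝ) < s ^ gp := Real.rpow_pos_of_pos hs0 gp
      constructor
      · have hbase : s ^ ((1:ℝ) - gp) * (τ / G τ) ≤ (s * τ) / G (s * τ) := by
          have e1 : s ^ ((1:ℝ) - gp) * (τ / G τ) = (s * τ) / (s ^ gp * G τ) := by
            rw [Real.rpow_sub hs0, Real.rpow_one]
            field_simp
          rw [e1, div_le_div_iff₀ (mul_pos hsgp hGτ) hGsτ]
          exact mul_le_mul_of_nonneg_left hu (mul_pos hs0 h0).le
        calc s ^ ((1 - gp) * k) * ff p G τ
            = (s ^ ((1:ℝ) - gp) * (τ / G τ)) ^ k := by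
              rw [Real.mul_rpow (Real.rpow_nonneg hs0.le _)
                (div_nonneg h0.le hGτ.le), ← Real.rpow_mul hs0.le]
              rfl
          _ ≤ ((s * τ) / G (s * τ)) ^ k :=
              Real.rpow_le_rpow (mul_nonneg (Real.rpow_nonneg hs0.le _)
                (div_nonneg h0.le hGτ.le)) hbase hk0.le
          _ = ff p G (s * τ) := rfl
      · have hbase : (s * τ) / G (s * τ) ≤ s ^ ((1:ℝ) - gm) * (τ / G τ) := by
          have e1 : s ^ ((1:ℝ) - gm) * (τ / G τ) = (s * τ) / (s ^ gm * G τ) := by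
            rw [Real.rpow_sub hs0, Real.rpow_one]
            field_simp
          rw [e1, div_le_div_iff₀ hGsτ (mul_pos hsgm hGτ)]
          exact mul_le_mul_of_nonneg_left hl (mul_pos hs0 h0).le
        calc ff p G (s * τ) = ((s * τ) / G (s * τ)) ^ k := rfl
          _ ≤ (s ^ ((1:ℝ) - gm) * (τ / G τ)) ^ k :=
              Real.rpow_le_rpow (div_nonneg (mul_pos hs0 h0).le hGsτ.le) hbase hk0.le
          _ = s ^ ((1 - gm) * k) * ff p G τ := by
              rw [Real.mul_rpow (Real.rpow_nonneg hs0.le _)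
                (div_nonneg h0.le hGτ.le), ← Real.rpow_mul hs0.le]
              rfl
  -- integrability
  have hi0 : IntervalIntegrable (ff p G) volume 0 t := ff_int hp hgp0 hgpn hGc hGpos hscu ht
  have hi2 : IntervalIntegrable (fun τ => ff p G (s * τ)) volume 0 t := by
    have := (ff_int hp hgp0 hgpn hGc hGpos hscu hst).comp_mul_left (c := s)
    rwa [zero_div, mul_div_cancel_left₀ _ hs0.ne'] at this
  have hmono1 : s ^ ((1 - gp) * k) * AA p G t ≤ s⁻¹ * AA p G (s * t) := by
    rw [← hcomp, AA, ← intervalIntegral.integral_const_mul]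
    exact intervalIntegral.integral_mono_on ht.le (hi0.const_mul _) hi2
      (fun τ hτ => (hpt τ hτ).1)
  have hmono2 : s⁻¹ * AA p G (s * t) ≤ s ^ ((1 - gm) * k) * AA p G t := by
    rw [← hcomp, AA, ← intervalIntegral.integral_const_mul]
    exact intervalIntegral.integral_mono_on ht.le hi2 (hi0.const_mul _)
      (fun τ hτ => (hpt τ hτ).2)
  have he1 : (1:ℝ) + (1 - gp) * k = (p - gp)/(p - 1) := by
    rw [hk]; field_simp; ring
  have he2 : (1:ℝ) + (1 - gm) * k = (p - gm)/(p - 1) := by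
    rw [hk]; field_simp; ring
  constructor
  · have := mul_le_mul_of_nonneg_left hmono1 hs0.le
    rw [mul_inv_cancel_left₀ hs0.ne'] at this
    calc s ^ ((p - gp)/(p-1)) * AA p G t = s * (s ^ ((1 - gp) * k) * AA p G t) := by
          rw [← he1, Real.rpow_add hs0, Real.rpow_one]; ring
      _ ≤ AA p G (s * t) := this
  · have := mul_le_mul_of_nonneg_left hmono2 hs0.le
    rw [mul_inv_cancel_left₀ hs0.ne'] at this
    calc AA p G (s * t) ≤ s * (s ^ ((1 - gm) * k) * AA p G t) := this
      _ = s ^ ((p - gm)/(p-1)) * AA p G t := by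
          rw [← he2, Real.rpow_add hs0, Real.rpow_one]; ring



lemma NN_zero (hp : 2 ≤ p) : NN p G 0 = 0 := by
  have h1 : (0:ℝ) < p - 1 := by linarith
  have h2 : (0:ℝ) < p := by linarith
  have h3 : (p-1)/p ≠ 0 := by positivity
  rw [NN, AA_zero, Real.zero_rpow h3]

lemma NN_nonneg (hGpos : ∀ t, 0 < t → 0 < G t) {t : ℝ} (ht : 0 ≤ t) : 0 ≤ NN p G t :=
  Real.rpow_nonneg (AA_nonneg hGpos ht) _

lemma NN_mono (hp : 2 ≤ p) (hgp0 : 0 < gp) (hgpn : gp < p)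
    (hGc : ContinuousOn G (Ici 0)) (hGpos : ∀ t, 0 < t → 0 < G t)
    (hscu : ∀ t, 0 < t → ∀ s, 1 ≤ s → G (s * t) ≤ s ^ gp * G t)
    {t₁ t₂ : ℝ} (ht₁ : 0 ≤ t₁) (h12 : t₁ ≤ t₂) : NN p G t₁ ≤ NN p G t₂ := by
  have h1 : (0:ℝ) < p - 1 := by linarith
  have h2 : (0:ℝ) < p := by linarith
  exact Real.rpow_le_rpow (AA_nonneg hGpos ht₁)
    (AA_mono hp hgp0 hgpn hGc hGpos hscu ht₁ h12) (by positivity)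

lemma NN_scale (hp : 2 ≤ p) (hgm1 : 1 < gm) (hgmp : gm ≤ gp) (hgpn : gp < p)
    (hGc : ContinuousOn G (Ici 0)) (hGpos : ∀ t, 0 < t → 0 < G t)
    (hsc : ∀ t, 0 < t → ∀ s, 1 ≤ s → s ^ gm * G t ≤ G (s * t) ∧ G (s * t) ≤ s ^ gp * G t)
    {t : ℝ} (ht : 0 < t) {s : ℝ} (hs : 1 ≤ s) :
    s ^ ((p - gp)/p) * NN p G t ≤ NN p G (s * t) ∧
      NN p G (s * t) ≤ s ^ ((p - gm)/p) * NN p G t := by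
  have hs0 : (0:ℝ) < s := lt_of_lt_of_le one_pos hs
  have hp1 : (0:ℝ) < p - 1 := by linarith
  have hp0 : (0:ℝ) < p := by linarith
  have hp1' : p - 1 ≠ 0 := hp1.ne'
  have hp0' : p ≠ 0 := hp0.ne'
  set β := (p-1)/p with hβ
  have hβ0 : 0 ≤ β := by positivity
  obtain ⟨h1, h2⟩ := AA_scale hp hgm1 hgmp hgpn hGc hGpos hsc ht hs
  have hAt : 0 ≤ AA p G t := AA_nonneg hGpos ht.le
  have hAst : 0 ≤ AA p G (s * t) := AA_nonneg hGpos (mul_pos hs0 ht).le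
  have hexp1 : (p - gp)/(p-1) * ((p-1)/p) = (p - gp)/p := by field_simp
  have hexp2 : (p - gm)/(p-1) * ((p-1)/p) = (p - gm)/p := by field_simp
  constructor
  · have key : (s ^ ((p - gp)/(p-1)) * AA p G t) ^ β = s ^ ((p - gp)/p) * NN p G t := by
      rw [Real.mul_rpow (Real.rpow_nonneg hs0.le _) hAt, ← Real.rpow_mul hs0.le, hβ,
        hexp1, NN]
    rw [← key]
    exact Real.rpow_le_rpow (mul_nonneg (Real.rpow_nonneg hs0.le _) hAt) h1 hβ0
  · have key : (s ^ ((p - gm)/(p-1)) * AA p G t) ^ β = s ^ ((p - gm)/p) * NN p G t := by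
      rw [Real.mul_rpow (Real.rpow_nonneg hs0.le _) hAt, ← Real.rpow_mul hs0.le, hβ,
        hexp2, NN]
    rw [← key]
    exact Real.rpow_le_rpow hAst h2 hβ0

lemma main_pointwise (p : ℝ) (hp : 2 ≤ p) (G g : ℝ → ℝ) (gm gp : ℝ)
    (hgm : 1 < gm) (hgmp : gm ≤ gp) (hgpn : gp < p)
    (hGc : ContinuousOn G (Ici 0)) (hGmono : MonotoneOn G (Ici 0))
    (hG0 : G 0 = 0) (hGpos : ∀ t, 0 < t → 0 < G t)
    (hrep : ∀ t, G t = ∫ s in (0:ℝ)..|t|, g s)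
    (hg0 : g 0 = 0) (hgodd : ∀ t, g (-t) = - g t) (hgmono : MonotoneOn g (Ici 0))
    (hb : ∀ t, 0 < t → gm ≤ t * g t / G t ∧ t * g t / G t ≤ gp)
    (Ninv : ℝ → ℝ)
    (hN : ∀ t, 0 ≤ t → 0 ≤ Ninv t ∧ NN p G (Ninv t) = t ∧ Ninv (NN p G t) = t) :
    ∀ s, 0 ≤ s → ∀ t, 0 ≤ t →
      min (s ^ (p * gm / (p - gm))) (s ^ (p * gp / (p - gp))) * G (Ninv t) ≤ G (Ninv (s * t)) ∧
      G (Ninv (s * t)) ≤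
        max (s ^ (p * gm / (p - gm))) (s ^ (p * gp / (p - gp))) * G (Ninv t) := by
  have hgm0 : (0:ℝ) < gm := lt_trans one_pos hgm
  have hgp0 : (0:ℝ) < gp := lt_of_lt_of_le hgm0 hgmp
  have hpgm : (0:ℝ) < p - gm := by linarith
  have hpgp : (0:ℝ) < p - gp := by linarith
  have hp0 : (0:ℝ) < p := by linarith
  have hGnonneg : ∀ w, 0 ≤ w → 0 ≤ G w := fun w hw => by
    rw [← hG0]; exact hGmono (mem_Ici.mpr le_rfl) (mem_Ici.mpr hw) hw
  -- g is monotone on all of ℝ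
  have hgmonoR : Monotone g := by
    intro u v huv
    rcases le_or_gt 0 u with hu | hu
    · exact hgmono (mem_Ici.mpr hu) (mem_Ici.mpr (le_trans hu huv)) huv
    · have hgu : g u = - g (-u) := by rw [← hgodd (-u), neg_neg]
      have h1 : g 0 ≤ g (-u) :=
        hgmono (mem_Ici.mpr le_rfl) (mem_Ici.mpr (by linarith)) (by linarith)
      rcases le_or_gt 0 v with hv | hv
      · have h2 : g 0 ≤ g v := hgmono (mem_Ici.mpr le_rfl) (mem_Ici.mpr hv) hv
        rw [hg0] at h1 h2
        rw [hgu]; linarith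
      · have hgv : g v = - g (-v) := by rw [← hgodd (-v), neg_neg]
        have h2 : g (-v) ≤ g (-u) :=
          hgmono (mem_Ici.mpr (by linarith)) (mem_Ici.mpr (by linarith)) (by linarith)
        rw [hgu, hgv]; linarith
  have hgint : ∀ a b : ℝ, IntervalIntegrable g volume a b :=
    fun a b => hgmonoR.intervalIntegrable
  have hrep' : ∀ t, 0 < t → G t = ∫ s in (0:ℝ)..t, g s := fun t ht => by
    rw [hrep t, abs_of_pos ht]
  have hub : ∀ t, 0 < t → g t ≤ gp * G t / t := by
    intro t ht
    have h := (hb t ht).2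
    have hGt := hGpos t ht
    rw [div_le_iff₀ hGt] at h
    rw [le_div_iff₀ ht]
    have := mul_comm (g t) t
    linarith
  have hlb : ∀ t, 0 < t → gm * G t / t ≤ g t := by
    intro t ht
    have h := (hb t ht).1
    have hGt := hGpos t ht
    rw [le_div_iff₀ hGt] at h
    rw [div_le_iff₀ ht]
    have := mul_comm (g t) t
    linarith
  have hsc : ∀ t, 0 < t → ∀ s, 1 ≤ s → s ^ gm * G t ≤ G (s * t) ∧ G (s * t) ≤ s ^ gp * G t := by
    intro t ht s hs
    have hst : t ≤ s * t := le_mul_of_one_le_left ht.le hs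
    have h1 := scale_lower hGc hGpos hrep' hgint hgmonoR hgm0 hlb t (s*t) ht hst
    have h2 := scale_upper hGc hGpos hrep' hgint hgmonoR hgp0 hub t (s*t) ht hst
    have hq : s * t / t = s := mul_div_cancel_right₀ s ht.ne'
    rw [hq] at h1 h2
    exact ⟨h1, h2⟩
  have hscu : ∀ t, 0 < t → ∀ s, 1 ≤ s → G (s*t) ≤ s ^ gp * G t :=
    fun t ht s hs => (hsc t ht s hs).2
  have NNinj : ∀ u v, 0 ≤ u → 0 ≤ v → NN p G u = NN p G v → u = v := by
    intro u v hu hv h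
    have e1 := (hN u hu).2.2
    have e2 := (hN v hv).2.2
    rw [← e1, ← e2, h]
  have le_of_NN_le : ∀ u v, 0 ≤ u → 0 ≤ v → NN p G u ≤ NN p G v → u ≤ v := by
    intro u v hu hv h
    by_contra hc
    push_neg at hc
    have h2 : NN p G v ≤ NN p G u := NN_mono hp hgp0 hgpn hGc hGpos hscu hv hc.le
    have h4 : u = v := NNinj u v hu hv (le_antisymm h h2)
    exact absurd h4 (ne_of_gt hc)
  have Ninv0 : Ninv 0 = 0 := by
    obtain ⟨h0, hN0, _⟩ := hN 0 le_rfl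
    exact NNinj (Ninv 0) 0 h0 le_rfl (by rw [hN0, NN_zero hp])
  -- key claim for s ≥ 1
  have K : ∀ s, 1 ≤ s → ∀ t, 0 < t →
      s ^ (p * gm / (p - gm)) * G (Ninv t) ≤ G (Ninv (s * t)) ∧
      G (Ninv (s * t)) ≤ s ^ (p * gp / (p - gp)) * G (Ninv t) := by
    intro s hs t ht
    have hs0 : (0:ℝ) < s := lt_of_lt_of_le one_pos hs
    have hst : 0 < s * t := mul_pos hs0 ht
    obtain ⟨hu0, hNu, _⟩ := hN t ht.le
    obtain ⟨hv0, hNv, _⟩ := hN (s*t) hst.le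
    have hupos : 0 < Ninv t := by
      rcases eq_or_lt_of_le hu0 with h | h
      · exfalso
        rw [← h, NN_zero hp] at hNu
        exact absurd hNu.symm ht.ne'
      · exact h
    constructor
    · -- lower bound
      set lam := s ^ (p / (p - gm)) with hlam
      have hlam1 : 1 ≤ lam := Real.one_le_rpow hs (by positivity)
      have hlam0 : 0 < lam := lt_of_lt_of_le one_pos hlam1
      have hexp : p / (p - gm) * ((p - gm) / p) = 1 := by field_simp
      have h1 := (NN_scale hp hgm hgmp hgpn hGc hGpos hsc hupos hlam1).2
      rw [hNu, hlam, ← Real.rpow_mul hs0.le, hexp, Real.rpow_one] at h1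
      -- h1 : NN (lam * Ninv t) ≤ s * t
      have hle : lam * Ninv t ≤ Ninv (s * t) := by
        apply le_of_NN_le _ _ (mul_nonneg hlam0.le hu0) hv0
        rw [hNv]; exact h1
      have h3 := (hsc (Ninv t) hupos lam hlam1).1
      have h4 : G (lam * Ninv t) ≤ G (Ninv (s*t)) :=
        hGmono (mem_Ici.mpr (mul_nonneg hlam0.le hu0)) (mem_Ici.mpr hv0) hle
      have h5 : lam ^ gm = s ^ (p * gm / (p - gm)) := by
        rw [hlam, ← Real.rpow_mul hs0.le]
        congr 1
        field_simp
      rw [h5] at h3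
      linarith
    · -- upper bound
      set lam := s ^ (p / (p - gp)) with hlam
      have hlam1 : 1 ≤ lam := Real.one_le_rpow hs (by positivity)
      have hlam0 : 0 < lam := lt_of_lt_of_le one_pos hlam1
      have hexp : p / (p - gp) * ((p - gp) / p) = 1 := by field_simp
      have h1 := (NN_scale hp hgm hgmp hgpn hGc hGpos hsc hupos hlam1).1
      rw [hNu, hlam, ← Real.rpow_mul hs0.le, hexp, Real.rpow_one] at h1
      -- h1 : s * t ≤ NN (lam * Ninv t)
      have hle : Ninv (s * t) ≤ lam * Ninv t := by
        apply le_of_NN_le _ _ hv0 (mul_nonneg hlam0.le hu0)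
        rw [hNv]; exact h1
      have h3 := (hsc (Ninv t) hupos lam hlam1).2
      have h4 : G (Ninv (s*t)) ≤ G (lam * Ninv t) :=
        hGmono (mem_Ici.mpr hv0) (mem_Ici.mpr (mul_nonneg hlam0.le hu0)) hle
      have h5 : lam ^ gp = s ^ (p * gp / (p - gp)) := by
        rw [hlam, ← Real.rpow_mul hs0.le]
        congr 1
        field_simp
      rw [h5] at h3
      linarith
  -- conclusion
  intro s hs t ht
  rcases eq_or_lt_of_le ht with h0 | ht0
  · rw [← h0, mul_zero, Ninv0, hG0]
    simp
  · rcases eq_or_lt_of_le hs with hs0 | hs0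
    · rw [← hs0, zero_mul, Ninv0, hG0]
      have e1 : (0:ℝ) ^ (p*gm/(p-gm)) = 0 :=
        Real.zero_rpow (by positivity : (0:ℝ) < p*gm/(p-gm)).ne'
      have e2 : (0:ℝ) ^ (p*gp/(p-gp)) = 0 :=
        Real.zero_rpow (by positivity : (0:ℝ) < p*gp/(p-gp)).ne'
      rw [e1, e2]
      simp
    · have hu0 : 0 ≤ Ninv t := (hN t ht).1
      have hGu : 0 ≤ G (Ninv t) := hGnonneg _ hu0
      rcases le_or_gt 1 s with hs1 | hs1
      · obtain ⟨k1, k2⟩ := K s hs1 t ht0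
        constructor
        · exact le_trans (mul_le_mul_of_nonneg_right (min_le_left _ _) hGu) k1
        · exact le_trans k2 (mul_le_mul_of_nonneg_right (le_max_right _ _) hGu)
      · have hsi : 1 ≤ s⁻¹ := by
          rw [← one_div, le_div_iff₀ hs0, one_mul]; exact hs1.le
        obtain ⟨k1, k2⟩ := K s⁻¹ hsi (s*t) (mul_pos hs0 ht0)
        rw [inv_mul_cancel_left₀ hs0.ne'] at k1 k2
        rw [Real.inv_rpow hs0.le] at k1 k2
        have hse1 : (0:ℝ) < s ^ (p*gm/(p-gm)) := Real.rpow_pos_of_pos hs0 _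
        have hse2 : (0:ℝ) < s ^ (p*gp/(p-gp)) := Real.rpow_pos_of_pos hs0 _
        rw [inv_mul_le_iff₀ hse1] at k1
        rw [le_inv_mul_iff₀ hse2] at k2
        constructor
        · exact le_trans (mul_le_mul_of_nonneg_right (min_le_right _ _) hGu) k2
        · exact le_trans k1 (mul_le_mul_of_nonneg_right (le_max_left _ _) hGu)

end Stmt12Aux


/-- Proposition 2.17(1): scaling property of the Sobolev conjugate
`G*(x,t) = G(x, N⁻¹(x,t))` with exponents `g*⁻ = ng⁻/(n−g⁻)`, `g*⁺ = ng⁺/(n−g⁺)`. -/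
theorem stmt_12 {n : ℕ} (hn : 2 ≤ n)
    (G g : EuclideanSpace ℝ (Fin n) → ℝ → ℝ)
    (hG : IsGenNFunction (Set.univ : Set (EuclideanSpace ℝ (Fin n))) G g)
    (gm gp : ℝ) (hgm : 1 < gm) (hgmp : gm ≤ gp) (hgpn : gp < n)
    (hG0 : ∀ᵐ x : EuclideanSpace ℝ (Fin n), ∀ t : ℝ, 0 < t →
      gm ≤ t * g x t / G x t ∧ t * g x t / G x t ≤ gp)
    (F : ℝ) (hF : 1 ≤ F)
    (hG1 : ∀ᵐ x : EuclideanSpace ℝ (Fin n), F⁻¹ ≤ G x 1 ∧ G x 1 ≤ F)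
    (Ginv : EuclideanSpace ℝ (Fin n) → ℝ → ℝ)
    (hGinv : ∀ᵐ x : EuclideanSpace ℝ (Fin n), ∀ t : ℝ, 0 ≤ t →
      0 ≤ Ginv x t ∧ G x (Ginv x t) = t ∧ Ginv x (G x t) = t)
    (hG2 : ∃ μ : ℝ, μ ∈ Set.Ioc (0:ℝ) 1 ∧
      ∀ (c : EuclideanSpace ℝ (Fin n)) (r : ℝ), 0 < r →
        volume (Metric.ball c r) ≤ 1 →
        ∀ t : ℝ, 1 ≤ t → ENNReal.ofReal t ≤ (volume (Metric.ball c r))⁻¹ →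
        ∀ᵐ x ∂(volume.restrict (Metric.ball c r)),
          ∀ᵐ y ∂(volume.restrict (Metric.ball c r)), μ * Ginv x t ≤ Ginv y t)
    (Ninv : EuclideanSpace ℝ (Fin n) → ℝ → ℝ)
    (hNinv : ∀ᵐ x : EuclideanSpace ℝ (Fin n), ∀ t : ℝ, 0 ≤ t →
      0 ≤ Ninv x t ∧ sobolevAux n G x (Ninv x t) = t ∧
      Ninv x (sobolevAux n G x t) = t) :
    ∀ᵐ x : EuclideanSpace ℝ (Fin n), ∀ s : ℝ, 0 ≤ s → ∀ t : ℝ, 0 ≤ t →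
      min (s ^ ((n : ℝ) * gm / ((n : ℝ) - gm))) (s ^ ((n : ℝ) * gp / ((n : ℝ) - gp))) *
          G x (Ninv x t) ≤ G x (Ninv x (s * t)) ∧
      G x (Ninv x (s * t)) ≤
        max (s ^ ((n : ℝ) * gm / ((n : ℝ) - gm))) (s ^ ((n : ℝ) * gp / ((n : ℝ) - gp))) *
          G x (Ninv x t) := by
  have hprops := hG.ae_props
  rw [Measure.restrict_univ] at hprops
  filter_upwards [hprops, hG0, hNinv] with x hx hbx hNx
  obtain ⟨heven, hGc, hGmono, hconv, hG0x, hGpos, _, _, hrepx, hg0x, hgposx, hgodd,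
    hgmono⟩ := hx
  have hp : (2:ℝ) ≤ (n:ℝ) := by exact_mod_cast hn
  have hNx' : ∀ t, 0 ≤ t → 0 ≤ Ninv x t ∧ Stmt12Aux.NN (n:ℝ) (G x) (Ninv x t) = t ∧
      Ninv x (Stmt12Aux.NN (n:ℝ) (G x) t) = t := hNx
  exact Stmt12Aux.main_pointwise (n:ℝ) hp (G x) (g x) gm gp hgm hgmp hgpn hGc hGmono
    hG0x hGpos hrepx hg0x hgodd hgmono hbx (Ninv x) hNx'
end
end

section
/- Let n ≥ 2 and let G(x,t) = ∫₀^{|t|} g(x,s) ds be a generalized N-function on ℝⁿ satisfying conditions (G0) with 1 < g⁻ ≤ g⁺ < n, (G1) and (G2). Let G*(x,t) = ∫₀^t g*(x,s) ds denote its Sobolev conjugate, defined by G*(x,t) := G(x, N^{-1}(x,t)) with N(x,t) := (∫₀^t (τ/G(x,τ))^{1/(n−1)} dτ)^{(n−1)/n}, where g*(x,·) is the right derivative of G*(x,·). Then for a.e. x and all t > 0 one has 1 < g*⁻ ≤ t·g*(x,t)/G*(x,t) ≤ g*⁺, where g*⁻ := n g⁻/(n − g⁻) and g*⁺ := n g⁺/(n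 − g⁺). -/
open MeasureTheory Set Filter

noncomputable section

open Topology

section OneVar

variable {Gf gg : ℝ → ℝ} {gm gp : ℝ}

lemma gg_intInt (ggm : MonotoneOn gg (Ici 0)) {x z : ℝ} (hx : 0 ≤ x) (hz : 0 ≤ z) :
    IntervalIntegrable gg volume x z := by
  refine (ggm.mono fun u hu => ?_).intervalIntegrable
  rcases Set.mem_uIcc.1 hu with ⟨h1, _⟩ | ⟨h1, _⟩
  · exact hx.trans h1
  · exact hz.trans h1

lemma Gdiff (Grep : ∀ t : ℝ, Gf t = ∫ s in (0:ℝ)..|t|, gg s)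
    (ggm : MonotoneOn gg (Ici 0)) {x z : ℝ} (hx : 0 ≤ x) (hz : 0 ≤ z) :
    Gf z - Gf x = ∫ s in x..z, gg s := by
  rw [Grep z, Grep x, abs_of_nonneg hx, abs_of_nonneg hz]
  exact intervalIntegral.integral_interval_sub_left
    (gg_intInt ggm le_rfl hz) (gg_intInt ggm le_rfl hx)

lemma slope_ge (Grep : ∀ t : ℝ, Gf t = ∫ s in (0:ℝ)..|t|, gg s)
    (ggm : MonotoneOn gg (Ici 0)) {x z : ℝ} (hx : 0 ≤ x) (hz : x ≤ z) :
    gg x * (z - x) ≤ Gf z - Gf x := by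
  rw [Gdiff Grep ggm hx (hx.trans hz)]
  have := intervalIntegral.integral_mono_on (μ := volume) (f := fun _ => gg x) (g := gg)
    hz intervalIntegrable_const (gg_intInt ggm hx (hx.trans hz))
    (fun u hu => ggm hx (hx.trans hu.1) hu.1)
  simpa [mul_comm] using this

lemma slope_le (Grep : ∀ t : ℝ, Gf t = ∫ s in (0:ℝ)..|t|, gg s)
    (ggm : MonotoneOn gg (Ici 0)) {x z : ℝ} (hx : 0 ≤ x) (hz : x ≤ z) :
    Gf z - Gf x ≤ gg z * (z - x) := by
  rw [Gdiff Grep ggm hx (hx.trans hz)]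
  have := intervalIntegral.integral_mono_on (μ := volume) (f := gg) (g := fun _ => gg z)
    hz (gg_intInt ggm hx (hx.trans hz)) intervalIntegrable_const
    (fun u hu => ggm (hx.trans hu.1) (hx.trans hz) hu.2)
  simpa [mul_comm] using this

end OneVar

section Comp

variable {Gf gg : ℝ → ℝ} {gm gp : ℝ}

lemma comp_upper_q (Gc : ContinuousOn Gf (Ici 0)) (Gpos : ∀ t, 0 < t → 0 < Gf t)
    (Grep : ∀ t : ℝ, Gf t = ∫ s in (0:ℝ)..|t|, gg s) (ggm : MonotoneOn gg (Ici 0))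
    (rhi : ∀ t, 0 < t → t * gg t ≤ gp * Gf t) {q : ℝ} (hq : gp < q)
    {a b : ℝ} (ha : 0 < a) (hab : a ≤ b) :
    Gf b ≤ Gf a * (b / a) ^ q := by
  set B : ℝ → ℝ := fun u => Gf a * (u / a) ^ q with hB
  set B' : ℝ → ℝ := fun u => Gf a * ((1 / a) * q * (u / a) ^ (q - 1)) with hB'
  have hBd : ∀ x ∈ Ico a b, HasDerivWithinAt B (B' x) (Ici x) x := by
    intro x hx
    have hxa : x / a ≠ 0 := (div_pos (ha.trans_le hx.1) ha).ne'
    have h1 : HasDerivAt (fun u : ℝ => u / a) (1 / a) x := by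
      simpa [div_eq_mul_inv, one_div] using (hasDerivAt_id x).div_const a
    exact (((h1.rpow_const (Or.inl hxa)).const_mul (Gf a)).hasDerivWithinAt)
  have key : ∀ x ∈ Icc a b, Gf x ≤ B x := by
    refine image_le_of_liminf_slope_right_lt_deriv_boundary'
      (f := Gf) (f' := fun x => gp * Gf x / x)
      (Gc.mono fun u hu => le_of_lt (ha.trans_le hu.1)) ?_ ?_ ?_ hBd ?_
    · -- liminf slope condition
      intro x hx r hr
      have hx0 : 0 < x := ha.trans_le hx.1
      have hGcx : ContinuousAt Gf x := Gc.continuousAt (Ici_mem_nhds hx0)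
      have htd : Tendsto (fun z => gp * Gf z / z) (𝓝[>] x) (𝓝 (gp * Gf x / x)) :=
        ((continuousAt_const.mul hGcx).div continuousAt_id hx0.ne').tendsto.mono_left
          nhdsWithin_le_nhds
      have ev1 : ∀ᶠ z in 𝓝[>] x, gp * Gf z / z < r := htd.eventually_lt_const hr
      refine (ev1.and self_mem_nhdsWithin).mono (fun z hz => ?_) |>.frequently
      obtain ⟨hzr, hzx⟩ := hz
      have hzx' : (x:ℝ) < z := hzx
      have hz0 : 0 < z := hx0.trans hzx'
      have hs : Gf z - Gf x ≤ gg z * (z - x) := slope_le Grep ggm hx0.le hzx'.le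
      have hggz : gg z ≤ gp * Gf z / z := by
        rw [le_div_iff₀ hz0]
        calc gg z * z = z * gg z := mul_comm _ _
        _ ≤ gp * Gf z := rhi z hz0
      rw [slope_def_field]
      calc (Gf z - Gf x) / (z - x) ≤ gg z := by
            rw [div_le_iff₀ (by linarith)]; linarith
      _ ≤ gp * Gf z / z := hggz
      _ < r := hzr
    · -- f a ≤ B a
      simp [hB, div_self ha.ne']
    · -- continuity of B
      exact continuousOn_const.mul ((continuousOn_id.div_const a).rpow_const
        (fun u hu => Or.inl (div_pos (ha.trans_le hu.1) ha).ne'))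
    · -- bound at contact points
      intro x hx hcontact
      have hx0 : 0 < x := ha.trans_le hx.1
      have hxa : (0:ℝ) < x / a := div_pos hx0 ha
      have hBx : B' x = q * Gf x / x := by
        rw [hcontact]
        simp only [hB, hB']
        rw [Real.rpow_sub hxa, Real.rpow_one]
        field_simp
      rw [hBx]
      have hGx : 0 < Gf x := Gpos x hx0
      exact div_lt_div_of_pos_right (by nlinarith) hx0
  exact key b ⟨hab, le_rfl⟩

end Comp

section Comp2

variable {Gf gg : ℝ → ℝ} {gm gp : ℝ}

lemma comp_lower_q (Gc : ContinuousOn Gf (Ici 0)) (Gpos : ∀ t, 0 < t → 0 < Gf t)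
    (Grep : ∀ t : ℝ, Gf t = ∫ s in (0:ℝ)..|t|, gg s) (ggm : MonotoneOn gg (Ici 0))
    (rlo : ∀ t, 0 < t → gm * Gf t ≤ t * gg t) {q : ℝ} (hq : q < gm)
    {a b : ℝ} (ha : 0 < a) (hab : a ≤ b) :
    Gf a * (b / a) ^ q ≤ Gf b := by
  set B : ℝ → ℝ := fun u => -(Gf a * (u / a) ^ q) with hB
  set B' : ℝ → ℝ := fun u => -(Gf a * ((1 / a) * q * (u / a) ^ (q - 1))) with hB'
  have hBd : ∀ x ∈ Ico a b, HasDerivWithinAt B (B' x) (Ici x) x := by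
    intro x hx
    have hxa : x / a ≠ 0 := (div_pos (ha.trans_le hx.1) ha).ne'
    have h1 : HasDerivAt (fun u : ℝ => u / a) (1 / a) x := by
      simpa [div_eq_mul_inv, one_div] using (hasDerivAt_id x).div_const a
    exact ((((h1.rpow_const (Or.inl hxa)).const_mul (Gf a)).neg).hasDerivWithinAt)
  have key : ∀ x ∈ Icc a b, -Gf x ≤ B x := by
    refine image_le_of_liminf_slope_right_lt_deriv_boundary'
      (f := fun u => -Gf u) (f' := fun x => -(gm * Gf x / x))
      ((Gc.mono fun u hu => le_of_lt (ha.trans_le hu.1)).neg) ?_ ?_ ?_ hBd ?_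
    · intro x hx r hr
      have hx0 : 0 < x := ha.trans_le hx.1
      refine (eventually_mem_nhdsWithin.mono (fun z hz => ?_) :
        ∀ᶠ z in 𝓝[>] x, slope (fun u => -Gf u) x z < r).frequently
      have hzx : (x:ℝ) < z := hz
      have hs : gg x * (z - x) ≤ Gf z - Gf x := slope_ge Grep ggm hx0.le hzx.le
      have hggx : gm * Gf x / x ≤ gg x := by
        rw [div_le_iff₀ hx0]
        calc gm * Gf x ≤ x * gg x := rlo x hx0
        _ = gg x * x := mul_comm _ _
      rw [slope_def_field]
      have : (Gf z - Gf x) / (z - x) ≥ gg x := by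
        rw [ge_iff_le, le_div_iff₀ (by linarith)]; linarith
      have h2 : (-Gf z - -Gf x) / (z - x) ≤ -(gm * Gf x / x) := by
        have : -((Gf z - Gf x) / (z - x)) ≤ -(gm * Gf x / x) := by
          apply neg_le_neg; linarith
        calc (-Gf z - -Gf x) / (z - x) = -((Gf z - Gf x) / (z - x)) := by ring
        _ ≤ -(gm * Gf x / x) := this
      exact lt_of_le_of_lt h2 hr
    · simp [hB, div_self ha.ne']
    · exact (continuousOn_const.mul ((continuousOn_id.div_const a).rpow_const
        (fun u hu => Or.inl (div_pos (ha.trans_le hu.1) ha).ne'))).neg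
    · intro x hx hcontact
      have hx0 : 0 < x := ha.trans_le hx.1
      have hxa : (0:ℝ) < x / a := div_pos hx0 ha
      have hGx : 0 < Gf x := Gpos x hx0
      have hcontact' : Gf a * (x / a) ^ q = Gf x := by
        have := hcontact
        simp only [hB] at this
        linarith [neg_injective this]
      have hBx : B' x = -(q * Gf x / x) := by
        simp only [hB']
        rw [Real.rpow_sub hxa, Real.rpow_one]
        rw [← hcontact']
        field_simp
      rw [hBx]
      apply neg_lt_neg
      exact div_lt_div_of_pos_right (by nlinarith) hx0
  have := key b ⟨hab, le_rfl⟩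
  simp only [hB] at this
  linarith

lemma comp_upper (Gc : ContinuousOn Gf (Ici 0)) (Gpos : ∀ t, 0 < t → 0 < Gf t)
    (Grep : ∀ t : ℝ, Gf t = ∫ s in (0:ℝ)..|t|, gg s) (ggm : MonotoneOn gg (Ici 0))
    (rhi : ∀ t, 0 < t → t * gg t ≤ gp * Gf t)
    {a b : ℝ} (ha : 0 < a) (hab : a ≤ b) :
    Gf b ≤ Gf a * (b / a) ^ gp := by
  have hba : (0:ℝ) < b / a := div_pos (ha.trans_le hab) ha
  have htd : Tendsto (fun q : ℝ => Gf a * (b / a) ^ q) (𝓝[>] gp)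
      (𝓝 (Gf a * (b / a) ^ gp)) :=
    (continuousAt_const.mul (Real.continuousAt_const_rpow hba.ne')).tendsto.mono_left
      nhdsWithin_le_nhds
  refine ge_of_tendsto htd (eventually_mem_nhdsWithin.mono fun q hq => ?_)
  exact comp_upper_q Gc Gpos Grep ggm rhi hq ha hab

lemma comp_lower (Gc : ContinuousOn Gf (Ici 0)) (Gpos : ∀ t, 0 < t → 0 < Gf t)
    (Grep : ∀ t : ℝ, Gf t = ∫ s in (0:ℝ)..|t|, gg s) (ggm : MonotoneOn gg (Ici 0))
    (rlo : ∀ t, 0 < t → gm * Gf t ≤ t * gg t)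
    {a b : ℝ} (ha : 0 < a) (hab : a ≤ b) :
    Gf a * (b / a) ^ gm ≤ Gf b := by
  have hba : (0:ℝ) < b / a := div_pos (ha.trans_le hab) ha
  have htd : Tendsto (fun q : ℝ => Gf a * (b / a) ^ q) (𝓝[<] gm)
      (𝓝 (Gf a * (b / a) ^ gm)) :=
    (continuousAt_const.mul (Real.continuousAt_const_rpow hba.ne')).tendsto.mono_left
      nhdsWithin_le_nhds
  refine le_of_tendsto htd (eventually_mem_nhdsWithin.mono fun q hq => ?_)
  exact comp_lower_q Gc Gpos Grep ggm rlo hq ha hab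

end Comp2

section HFun

variable {Gf gg : ℝ → ℝ} {gm gp : ℝ}

lemma h_upper (Gc : ContinuousOn Gf (Ici 0)) (Gpos : ∀ t, 0 < t → 0 < Gf t)
    (Grep : ∀ t : ℝ, Gf t = ∫ s in (0:ℝ)..|t|, gg s) (ggm : MonotoneOn gg (Ici 0))
    (rhi : ∀ t, 0 < t → t * gg t ≤ gp * Gf t) {β : ℝ} (hβ : 0 ≤ β)
    {s τ : ℝ} (hs : 0 < s) (hτ0 : 0 < τ) (hτs : τ ≤ s) :
    (τ / Gf τ) ^ β ≤ (s ^ gp / Gf s) ^ β * τ ^ ((1 - gp) * β) := by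
  have hGτ := Gpos τ hτ0
  have hGs := Gpos s hs
  have h1 : Gf s ≤ Gf τ * (s / τ) ^ gp := comp_upper Gc Gpos Grep ggm rhi hτ0 hτs
  have hstpos : (0:ℝ) < (s / τ) ^ gp := Real.rpow_pos_of_pos (div_pos hs hτ0) gp
  have h2 : τ / Gf τ ≤ τ * (s / τ) ^ gp / Gf s := by
    rw [div_le_div_iff₀ hGτ hGs]
    nlinarith
  have h3 : τ * (s / τ) ^ gp / Gf s = s ^ gp / Gf s * τ ^ (1 - gp) := by
    rw [Real.div_rpow hs.le hτ0.le, Real.rpow_sub hτ0, Real.rpow_one]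
    field_simp
  calc (τ / Gf τ) ^ β ≤ (s ^ gp / Gf s * τ ^ (1 - gp)) ^ β :=
        Real.rpow_le_rpow (div_nonneg hτ0.le hGτ.le) (h2.trans_eq h3) hβ
  _ = (s ^ gp / Gf s) ^ β * τ ^ ((1 - gp) * β) := by
      rw [Real.mul_rpow (div_nonneg (Real.rpow_nonneg hs.le _) hGs.le)
        (Real.rpow_nonneg hτ0.le _), ← Real.rpow_mul hτ0.le]

lemma h_lower (Gc : ContinuousOn Gf (Ici 0)) (Gpos : ∀ t, 0 < t → 0 < Gf t)
    (Grep : ∀ t : ℝ, Gf t = ∫ s in (0:ℝ)..|t|, gg s) (ggm : MonotoneOn gg (Ici 0))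
    (rlo : ∀ t, 0 < t → gm * Gf t ≤ t * gg t) {β : ℝ} (hβ : 0 ≤ β)
    {s τ : ℝ} (hs : 0 < s) (hτ0 : 0 < τ) (hτs : τ ≤ s) :
    (s ^ gm / Gf s) ^ β * τ ^ ((1 - gm) * β) ≤ (τ / Gf τ) ^ β := by
  have hGτ := Gpos τ hτ0
  have hGs := Gpos s hs
  have h1 : Gf τ * (s / τ) ^ gm ≤ Gf s := comp_lower Gc Gpos Grep ggm rlo hτ0 hτs
  have hstpos : (0:ℝ) < (s / τ) ^ gm := Real.rpow_pos_of_pos (div_pos hs hτ0) gm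
  have h2 : τ * (s / τ) ^ gm / Gf s ≤ τ / Gf τ := by
    rw [div_le_div_iff₀ hGs hGτ]
    nlinarith
  have h3 : τ * (s / τ) ^ gm / Gf s = s ^ gm / Gf s * τ ^ (1 - gm) := by
    rw [Real.div_rpow hs.le hτ0.le, Real.rpow_sub hτ0, Real.rpow_one]
    field_simp
  calc (s ^ gm / Gf s) ^ β * τ ^ ((1 - gm) * β)
      = (s ^ gm / Gf s * τ ^ (1 - gm)) ^ β := by
        rw [Real.mul_rpow (div_nonneg (Real.rpow_nonneg hs.le _) hGs.le)
          (Real.rpow_nonneg hτ0.le _), ← Real.rpow_mul hτ0.le]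
  _ ≤ (τ / Gf τ) ^ β :=
      Real.rpow_le_rpow (by positivity) (h3 ▸ h2) hβ

end HFun

section AInt

variable {Gf gg : ℝ → ℝ} {gm gp ν : ℝ}

lemma hfun_cont (Gc : ContinuousOn Gf (Ici 0)) (Gpos : ∀ t, 0 < t → 0 < Gf t) {β : ℝ} :
    ContinuousOn (fun τ => (τ / Gf τ) ^ β) (Ioi 0) := by
  refine ContinuousOn.rpow_const ?_ (fun τ hτ => Or.inl (div_pos hτ (Gpos τ hτ)).ne')
  exact continuousOn_id.div (Gc.mono fun u hu => Set.mem_Ici.2 (le_of_lt hu)) (fun τ hτ => (Gpos τ hτ).ne')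

lemma hfun_intInt (Gc : ContinuousOn Gf (Ici 0)) (Gpos : ∀ t, 0 < t → 0 < Gf t)
    (Grep : ∀ t : ℝ, Gf t = ∫ s in (0:ℝ)..|t|, gg s) (ggm : MonotoneOn gg (Ici 0))
    (rhi : ∀ t, 0 < t → t * gg t ≤ gp * Gf t)
    (hν : 2 ≤ ν) (hgp1 : 1 < gp) (hgpn : gp < ν) {s : ℝ} (hs : 0 < s) :
    IntervalIntegrable (fun τ => (τ / Gf τ) ^ (1 / (ν - 1))) volume 0 s := by
  have hν1 : (0:ℝ) < ν - 1 := by linarith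
  set β : ℝ := 1 / (ν - 1) with hβdef
  have hβ : 0 < β := by positivity
  have hαp : -1 < (1 - gp) * β := by
    rw [show (1 - gp) * β = (1 - gp) / (ν - 1) by rw [hβdef]; ring, lt_div_iff₀ hν1]
    linarith
  have hbase : IntervalIntegrable (fun τ => (s ^ gp / Gf s) ^ β * τ ^ ((1 - gp) * β))
      volume 0 s := (intervalIntegral.intervalIntegrable_rpow' hαp).const_mul _
  refine hbase.mono_fun ?_ ?_
  · refine ((hfun_cont Gc Gpos).mono (fun τ hτ => ?_)).aestronglyMeasurable ?_
    · rw [uIoc_of_le hs.le] at hτ; exact hτ.1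
    · rw [uIoc_of_le hs.le]; exact measurableSet_Ioc
  · rw [uIoc_of_le hs.le]
    refine (ae_restrict_mem measurableSet_Ioc).mono (fun τ hτ => ?_)
    have hτ0 : 0 < τ := hτ.1
    simp only [Real.norm_eq_abs]
    rw [abs_of_nonneg (Real.rpow_nonneg (div_nonneg hτ0.le (Gpos τ hτ0).le) _),
      abs_of_nonneg (mul_nonneg (Real.rpow_nonneg
        (div_nonneg (Real.rpow_nonneg hs.le _) (Gpos s hs).le) _) (Real.rpow_nonneg hτ0.le _))]
    exact h_upper Gc Gpos Grep ggm rhi hβ.le hs hτ0 hτ.2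

lemma key_eq {g β s Gs : ℝ} (hs : 0 < s) (hGs : 0 < Gs) :
    (s ^ g / Gs) ^ β * s ^ ((1 - g) * β + 1) = s * (s / Gs) ^ β := by
  rw [Real.div_rpow (Real.rpow_nonneg hs.le _) hGs.le, Real.div_rpow hs.le hGs.le,
    ← Real.rpow_mul hs.le, div_mul_eq_mul_div, ← Real.rpow_add hs,
    show g * β + ((1 - g) * β + 1) = β + 1 by ring, Real.rpow_add hs, Real.rpow_one]
  ring

lemma A_upper (Gc : ContinuousOn Gf (Ici 0)) (Gpos : ∀ t, 0 < t → 0 < Gf t)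
    (Grep : ∀ t : ℝ, Gf t = ∫ s in (0:ℝ)..|t|, gg s) (ggm : MonotoneOn gg (Ici 0))
    (rhi : ∀ t, 0 < t → t * gg t ≤ gp * Gf t)
    (hν : 2 ≤ ν) (hgp1 : 1 < gp) (hgpn : gp < ν) {s : ℝ} (hs : 0 < s) :
    ∫ τ in (0:ℝ)..s, (τ / Gf τ) ^ (1 / (ν - 1))
      ≤ (ν - 1) / (ν - gp) * (s * (s / Gf s) ^ (1 / (ν - 1))) := by
  have hν1 : (0:ℝ) < ν - 1 := by linarith
  have hνgp : (0:ℝ) < ν - gp := by linarith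
  set β : ℝ := 1 / (ν - 1) with hβdef
  have hβ : 0 < β := by positivity
  set αp : ℝ := (1 - gp) * β with hαpdef
  have hαp : -1 < αp := by
    rw [hαpdef, show (1 - gp) * β = (1 - gp) / (ν - 1) by rw [hβdef]; ring, lt_div_iff₀ hν1]
    linarith
  have hαp1 : αp + 1 = (ν - gp) / (ν - 1) := by
    rw [hαpdef, hβdef]; field_simp; ring
  have hαp1pos : 0 < αp + 1 := by rw [hαp1]; positivity
  have hG0 : Gf 0 = 0 := by simpa using Grep 0
  set C : ℝ := (s ^ gp / Gf s) ^ β with hCdef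
  have step1 : ∫ τ in (0:ℝ)..s, (τ / Gf τ) ^ β ≤ ∫ τ in (0:ℝ)..s, C * τ ^ αp := by
    refine intervalIntegral.integral_mono_on hs.le
      (hfun_intInt Gc Gpos Grep ggm rhi hν hgp1 hgpn hs)
      ((intervalIntegral.intervalIntegrable_rpow' hαp).const_mul _) (fun τ hτ => ?_)
    rcases eq_or_lt_of_le hτ.1 with h0 | hτ0
    · rw [← h0, hG0]
      simp only [div_zero, zero_div]
      rw [Real.zero_rpow hβ.ne', Real.zero_rpow (by rw [hαpdef]; nlinarith : αp ≠ 0)]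
      simp
    · exact h_upper Gc Gpos Grep ggm rhi hβ.le hs hτ0 hτ.2
  have step2 : ∫ τ in (0:ℝ)..s, C * τ ^ αp = C * (s ^ (αp + 1) / (αp + 1)) := by
    rw [intervalIntegral.integral_const_mul, integral_rpow (Or.inl hαp),
      Real.zero_rpow hαp1pos.ne']
    ring_nf
  have step3 : C * (s ^ (αp + 1) / (αp + 1)) = (ν - 1) / (ν - gp) * (s * (s / Gf s) ^ β) := by
    rw [mul_div_assoc']
    rw [show C * s ^ (αp + 1) = s * (s / Gf s) ^ β from key_eq hs (Gpos s hs), hαp1]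
    have h1 : (ν:ℝ) - 1 ≠ 0 := by linarith
    have h2 : (ν:ℝ) - gp ≠ 0 := by linarith
    field_simp
  calc ∫ τ in (0:ℝ)..s, (τ / Gf τ) ^ β ≤ C * (s ^ (αp + 1) / (αp + 1)) := step1.trans_eq step2
  _ = _ := step3

end AInt

section AInt2

variable {Gf gg : ℝ → ℝ} {gm gp ν : ℝ}

lemma A_lower (Gc : ContinuousOn Gf (Ici 0)) (Gpos : ∀ t, 0 < t → 0 < Gf t)
    (Grep : ∀ t : ℝ, Gf t = ∫ s in (0:ℝ)..|t|, gg s) (ggm : MonotoneOn gg (Ici 0))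
    (rlo : ∀ t, 0 < t → gm * Gf t ≤ t * gg t)
    (rhi : ∀ t, 0 < t → t * gg t ≤ gp * Gf t)
    (hν : 2 ≤ ν) (hgm1 : 1 < gm) (hgmp : gm ≤ gp) (hgpn : gp < ν) {s : ℝ} (hs : 0 < s) :
    (ν - 1) / (ν - gm) * (s * (s / Gf s) ^ (1 / (ν - 1)))
      ≤ ∫ τ in (0:ℝ)..s, (τ / Gf τ) ^ (1 / (ν - 1)) := by
  have hν1 : (0:ℝ) < ν - 1 := by linarith
  have hνgm : (0:ℝ) < ν - gm := by linarith
  set β : ℝ := 1 / (ν - 1) with hβdef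
  have hβ : 0 < β := by positivity
  set αm : ℝ := (1 - gm) * β with hαmdef
  have hαm : -1 < αm := by
    rw [hαmdef, show (1 - gm) * β = (1 - gm) / (ν - 1) by rw [hβdef]; ring, lt_div_iff₀ hν1]
    linarith
  have hαm1 : αm + 1 = (ν - gm) / (ν - 1) := by
    rw [hαmdef, hβdef]; field_simp; ring
  have hαm1pos : 0 < αm + 1 := by rw [hαm1]; positivity
  have hG0 : Gf 0 = 0 := by simpa using Grep 0
  set C : ℝ := (s ^ gm / Gf s) ^ β with hCdef
  have step1 : ∫ τ in (0:ℝ)..s, C * τ ^ αm ≤ ∫ τ in (0:ℝ)..s, (τ / Gf τ) ^ β := by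
    refine intervalIntegral.integral_mono_on hs.le
      ((intervalIntegral.intervalIntegrable_rpow' hαm).const_mul _)
      (hfun_intInt Gc Gpos Grep ggm rhi hν (hgm1.trans_le hgmp) hgpn hs) (fun τ hτ => ?_)
    rcases eq_or_lt_of_le hτ.1 with h0 | hτ0
    · rw [← h0, hG0]
      simp only [div_zero, zero_div]
      rw [Real.zero_rpow hβ.ne', Real.zero_rpow (by rw [hαmdef]; nlinarith : αm ≠ 0)]
      simp
    · exact h_lower Gc Gpos Grep ggm rlo hβ.le hs hτ0 hτ.2
  have step2 : ∫ τ in (0:ℝ)..s, C * τ ^ αm = C * (s ^ (αm + 1) / (αm + 1)) := by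
    rw [intervalIntegral.integral_const_mul, integral_rpow (Or.inl hαm),
      Real.zero_rpow hαm1pos.ne']
    ring_nf
  have step3 : C * (s ^ (αm + 1) / (αm + 1)) = (ν - 1) / (ν - gm) * (s * (s / Gf s) ^ β) := by
    rw [mul_div_assoc']
    rw [show C * s ^ (αm + 1) = s * (s / Gf s) ^ β from key_eq hs (Gpos s hs), hαm1]
    have h1 : (ν:ℝ) - 1 ≠ 0 := by linarith
    have h2 : (ν:ℝ) - gm ≠ 0 := by linarith
    field_simp
  calc (ν - 1) / (ν - gm) * (s * (s / Gf s) ^ β) = C * (s ^ (αm + 1) / (αm + 1)) := step3.symm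
  _ ≤ _ := step1.trans_eq' step2

end AInt2

section Key

set_option maxHeartbeats 2000000 in
lemma key (ν : ℝ) (hν : 2 ≤ ν) {gm gp : ℝ} (hgm1 : 1 < gm) (hgmp : gm ≤ gp) (hgpn : gp < ν)
    {Gf gg : ℝ → ℝ}
    (Gc : ContinuousOn Gf (Ici 0)) (Gpos : ∀ t, 0 < t → 0 < Gf t)
    (Grep : ∀ t : ℝ, Gf t = ∫ s in (0:ℝ)..|t|, gg s) (ggm : MonotoneOn gg (Ici 0))
    (rlo : ∀ t, 0 < t → gm * Gf t ≤ t * gg t) (rhi : ∀ t, 0 < t → t * gg t ≤ gp * Gf t)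
    {NN Ninv : ℝ → ℝ}
    (hNNdef : ∀ s : ℝ, NN s = (∫ τ in (0:ℝ)..s, (τ / Gf τ) ^ (1 / (ν - 1))) ^ ((ν - 1) / ν))
    (hNinv : ∀ t, 0 ≤ t → 0 ≤ Ninv t ∧ NN (Ninv t) = t ∧ Ninv (NN t) = t)
    {gs t : ℝ} (ht : 0 < t)
    (hder : HasDerivWithinAt (fun τ => Gf (Ninv τ)) gs (Ici t) t) :
    ν * gm / (ν - gm) ≤ t * gs / Gf (Ninv t) ∧ t * gs / Gf (Ninv t) ≤ ν * gp / (ν - gp) := by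
  have hν0 : (0:ℝ) < ν := by linarith
  have hν1 : (0:ℝ) < ν - 1 := by linarith
  have hνgm : (0:ℝ) < ν - gm := by linarith
  have hνgp : (0:ℝ) < ν - gp := by linarith
  have hgp1 : 1 < gp := hgm1.trans_le hgmp
  set β : ℝ := 1 / (ν - 1) with hβdef
  have hβ : 0 < β := by positivity
  set c : ℝ := (ν - 1) / ν with hcdef
  have hc : 0 < c := by positivity
  set hh : ℝ → ℝ := fun τ => (τ / Gf τ) ^ β with hhdef
  set Af : ℝ → ℝ := fun s => ∫ τ in (0:ℝ)..s, hh τ with hAfdef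
  have hGnn : ∀ τ : ℝ, 0 ≤ τ → 0 ≤ Gf τ := by
    intro τ hτ
    rcases eq_or_lt_of_le hτ with h | h
    · rw [← h]; simp [Grep 0]
    · exact (Gpos τ h).le
  have hhnn : ∀ τ : ℝ, 0 ≤ τ → 0 ≤ hh τ := fun τ hτ =>
    Real.rpow_nonneg (div_nonneg hτ (hGnn τ hτ)) β
  have hAnn : ∀ a : ℝ, 0 ≤ a → 0 ≤ Af a := fun a ha =>
    intervalIntegral.integral_nonneg ha (fun τ hτ => hhnn τ hτ.1)
  have hint0 : ∀ x : ℝ, 0 ≤ x → IntervalIntegrable hh volume 0 x := by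
    intro x hx
    rcases eq_or_lt_of_le hx with h | h
    · rw [← h]
    · exact hfun_intInt Gc Gpos Grep ggm rhi hν hgp1 hgpn h
  have hNN0 : NN 0 = 0 := by
    rw [hNNdef]
    simp only [intervalIntegral.integral_same]
    exact Real.zero_rpow hc.ne'
  obtain ⟨hs0, hNs, _⟩ := hNinv t ht.le
  set s := Ninv t with hsdef
  have hspos : 0 < s := by
    rcases eq_or_lt_of_le hs0 with h | h
    · exfalso; rw [← h] at hNs; rw [hNN0] at hNs; linarith
    · exact h
  have hGs : 0 < Gf s := Gpos s hspos
  have hhs : 0 < hh s := Real.rpow_pos_of_pos (div_pos hspos hGs) β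
  have hAlow := A_lower Gc Gpos Grep ggm rlo rhi hν hgm1 hgmp hgpn hspos
  have hAup := A_upper Gc Gpos Grep ggm rhi hν hgp1 hgpn hspos
  have hApos : 0 < Af s := lt_of_lt_of_le (by positivity) hAlow
  have hA' : HasDerivAt Af (hh s) s :=
    intervalIntegral.integral_hasDerivAt_right (hint0 s hs0)
      ((hfun_cont Gc Gpos).stronglyMeasurableAtFilter isOpen_Ioi s hspos)
      ((hfun_cont Gc Gpos).continuousAt (Ioi_mem_nhds hspos))
  have hNNfun : NN = fun y => Af y ^ c := funext fun y => hNNdef y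
  set d : ℝ := hh s * c * Af s ^ (c - 1) with hddef
  have hNN' : HasDerivAt NN d s := by
    rw [hNNfun]
    exact hA'.rpow_const (Or.inl hApos.ne')
  have hdpos : 0 < d := by
    have : (0:ℝ) < Af s ^ (c - 1) := Real.rpow_pos_of_pos hApos _
    positivity
  have hAmono : ∀ a b : ℝ, 0 ≤ a → a < b → Af a < Af b := by
    intro a b ha hab
    have hb : 0 < b := lt_of_le_of_lt ha hab
    have hint' : IntervalIntegrable hh volume a b :=
      (hint0 b hb.le).mono_set (by
        rw [uIcc_of_le hb.le, uIcc_of_le hab.le]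
        exact Icc_subset_Icc ha le_rfl)
    have hpos : 0 < ∫ τ in a..b, hh τ :=
      intervalIntegral.intervalIntegral_pos_of_pos_on hint'
        (fun τ hτ => Real.rpow_pos_of_pos
          (div_pos (lt_of_le_of_lt ha hτ.1) (Gpos τ (lt_of_le_of_lt ha hτ.1))) β) hab
    have hsub : Af b - Af a = ∫ τ in a..b, hh τ :=
      intervalIntegral.integral_interval_sub_left (hint0 b hb.le) (hint0 a ha)
    linarith
  have hNNmono : ∀ a b : ℝ, 0 ≤ a → a < b → NN a < NN b := by
    intro a b ha hab
    rw [hNNfun]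
    exact Real.rpow_lt_rpow (hAnn a ha) (hAmono a b ha hab) hc
  have hNNmono' : ∀ a b : ℝ, 0 ≤ a → a ≤ b → NN a ≤ NN b := by
    intro a b ha hab
    rcases eq_or_lt_of_le hab with h | h
    · rw [h]
    · exact (hNNmono a b ha h).le
  have hNNnn : ∀ a : ℝ, 0 ≤ a → 0 ≤ NN a := by
    intro a ha
    rw [hNNfun]
    exact Real.rpow_nonneg (hAnn a ha) c
  have hNinvmono : ∀ t1 t2 : ℝ, 0 ≤ t1 → t1 ≤ t2 → Ninv t1 ≤ Ninv t2 := by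
    intro t1 t2 h1 h12
    by_contra hlt
    push_neg at hlt
    obtain ⟨a0, aN, _⟩ := hNinv t1 h1
    obtain ⟨b0, bN, _⟩ := hNinv t2 (h1.trans h12)
    have := hNNmono _ _ b0 hlt
    rw [aN, bN] at this
    linarith
  have hNinvcont : ContinuousAt Ninv t := by
    refine tendsto_order.2 ⟨?_, ?_⟩
    · intro a ha
      rcases lt_or_ge a 0 with ha0 | ha0
      · filter_upwards [Ioi_mem_nhds ht] with τ hτ
        exact lt_of_lt_of_le ha0 (hNinv τ (le_of_lt (mem_Ioi.1 hτ))).1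
      · have has : a < s := ha
        have hNa : NN a < t := by rw [← hNs]; exact hNNmono a s ha0 has
        filter_upwards [Ioi_mem_nhds hNa] with τ hτ
        have hτ' : NN a < τ := mem_Ioi.1 hτ
        have hτ0 : 0 ≤ τ := (hNNnn a ha0).trans hτ'.le
        by_contra hc'
        push_neg at hc'
        obtain ⟨σ0, σN, _⟩ := hNinv τ hτ0
        have := hNNmono' (Ninv τ) a σ0 hc'
        rw [σN] at this
        linarith
    · intro b hb
      have hbs : s < b := hb
      have hb0 : 0 ≤ b := hs0.trans hbs.le
      have hNb : t < NN b := by rw [← hNs]; exact hNNmono s b hs0 hbs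
      filter_upwards [Iio_mem_nhds hNb, Ioi_mem_nhds ht] with τ h1 h2
      have h1' : τ < NN b := mem_Iio.1 h1
      have h2' : (0:ℝ) < τ := mem_Ioi.1 h2
      by_contra hc'
      push_neg at hc'
      obtain ⟨σ0, σN, _⟩ := hNinv τ h2'.le
      have := hNNmono' b (Ninv τ) hb0 hc'
      rw [σN] at this
      linarith
  have hNder : HasDerivAt Ninv d⁻¹ t := by
    refine HasDerivAt.of_local_left_inverse (f := NN) hNinvcont ?_ hdpos.ne' ?_
    · exact hNN'
    · filter_upwards [Ioi_mem_nhds ht] with y hy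
      exact (hNinv y (le_of_lt (mem_Ioi.1 hy))).2.1
  have hslope : Tendsto (slope (fun τ => Gf (Ninv τ)) t) (𝓝[>] t) (𝓝 gs) := by
    have := hasDerivWithinAt_iff_tendsto_slope.1 hder
    rwa [Set.Ici_sdiff_left] at this
  have hslopeN : Tendsto (slope Ninv t) (𝓝[>] t) (𝓝 d⁻¹) :=
    (hasDerivAt_iff_tendsto_slope.1 hNder).mono_left
      (nhdsWithin_mono t (fun τ hτ => ne_of_gt (mem_Ioi.1 hτ)))
  have hsmem : ∀ τ : ℝ, t < τ → s ≤ Ninv τ ∧ 0 < Ninv τ := by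
    intro τ hτ
    have h1 : s ≤ Ninv τ := hNinvmono t τ ht.le hτ.le
    exact ⟨h1, lt_of_lt_of_le hspos h1⟩
  have hggs : 0 < gg s := by
    have := rlo s hspos
    nlinarith
  have hlow : gg s * d⁻¹ ≤ gs := by
    refine le_of_tendsto_of_tendsto (hslopeN.const_mul (gg s)) hslope ?_
    filter_upwards [eventually_mem_nhdsWithin] with τ hτ
    have hτt : t < τ := mem_Ioi.1 hτ
    obtain ⟨hsσ, hσpos⟩ := hsmem τ hτt
    have h1 : gg s * (Ninv τ - s) ≤ Gf (Ninv τ) - Gf s := slope_ge Grep ggm hspos.le hsσ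
    have hτtpos : 0 < τ - t := by linarith
    simp only [slope_def_field]
    rw [show Ninv t = s from rfl]
    calc gg s * ((Ninv τ - s) / (τ - t)) = gg s * (Ninv τ - s) / (τ - t) := by ring
    _ ≤ (Gf (Ninv τ) - Gf s) / (τ - t) := by gcongr
  have hupp : gs ≤ gp * (Gf s / s) * d⁻¹ := by
    have hGcat : ContinuousAt Gf s := Gc.continuousAt (Ici_mem_nhds hspos)
    have htd1 : Tendsto (fun τ => gp * (Gf (Ninv τ) / Ninv τ)) (𝓝[>] t)
        (𝓝 (gp * (Gf s / s))) := by
      have h1 : ContinuousAt (fun τ => gp * (Gf (Ninv τ) / Ninv τ)) t :=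
        continuousAt_const.mul ((hGcat.comp hNinvcont).div hNinvcont hspos.ne')
      exact h1.tendsto.mono_left nhdsWithin_le_nhds
    refine le_of_tendsto_of_tendsto hslope (htd1.mul hslopeN) ?_
    filter_upwards [eventually_mem_nhdsWithin] with τ hτ
    have hτt : t < τ := mem_Ioi.1 hτ
    obtain ⟨hsσ, hσpos⟩ := hsmem τ hτt
    have h1 : Gf (Ninv τ) - Gf s ≤ gg (Ninv τ) * (Ninv τ - s) := slope_le Grep ggm hspos.le hsσ
    have h2 : gg (Ninv τ) ≤ gp * (Gf (Ninv τ) / Ninv τ) := by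
      have := rhi (Ninv τ) hσpos
      rw [mul_div_assoc']
      rw [le_div_iff₀ hσpos]
      nlinarith
    have hτtpos : 0 < τ - t := by linarith
    simp only [slope_def_field]
    rw [show Ninv t = s from rfl]
    calc (Gf (Ninv τ) - Gf s) / (τ - t) ≤ gg (Ninv τ) * (Ninv τ - s) / (τ - t) := by gcongr
    _ ≤ gp * (Gf (Ninv τ) / Ninv τ) * (Ninv τ - s) / (τ - t) := by
        have hnn : 0 ≤ (Ninv τ - s) := by linarith
        gcongr
    _ = gp * (Gf (Ninv τ) / Ninv τ) * ((Ninv τ - s) / (τ - t)) := by ring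
  -- final algebra
  have htA : t = Af s ^ c := by rw [← hNs, hNNfun]
  have hAc : (0:ℝ) < Af s ^ c := Real.rpow_pos_of_pos hApos c
  have htd : t / d = Af s / (hh s * c) := by
    rw [htA, hddef, Real.rpow_sub_one hApos.ne']
    field_simp
  have hglow : gm * (Gf s / s) ≤ gg s := by
    have := rlo s hspos
    rw [mul_div_assoc', div_le_iff₀ hspos]
    nlinarith
  have hAlow' : (ν - 1) / (ν - gm) * (s * hh s) ≤ Af s := by
    simp only [hhdef, hβdef]
    exact hAlow
  have hAup' : Af s ≤ (ν - 1) / (ν - gp) * (s * hh s) := by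
    simp only [hhdef, hβdef]
    exact hAup
  have hn1 : Gf s ≠ 0 := hGs.ne'
  have hn2 : s ≠ 0 := hspos.ne'
  have hn3 : hh s ≠ 0 := hhs.ne'
  have hn4 : ν ≠ 0 := hν0.ne'
  have hn5 : ν - 1 ≠ 0 := hν1.ne'
  have hn6 : ν - gm ≠ 0 := hνgm.ne'
  have hn7 : ν - gp ≠ 0 := hνgp.ne'
  constructor
  · calc ν * gm / (ν - gm)
        = gm * (Gf s / s) * (((ν - 1) / (ν - gm) * (s * hh s)) / (hh s * c)) / Gf s := by
          rw [hcdef]; field_simp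
    _ ≤ gg s * (Af s / (hh s * c)) / Gf s := by
          have hmul : gm * (Gf s / s) * (((ν - 1) / (ν - gm) * (s * hh s)) / (hh s * c))
              ≤ gg s * (Af s / (hh s * c)) :=
            mul_le_mul hglow (by gcongr) (by positivity) hggs.le
          gcongr
    _ = gg s * (t / d) / Gf s := by rw [htd]
    _ = t * (gg s * d⁻¹) / Gf s := by rw [div_eq_mul_inv t d]; ring
    _ ≤ t * gs / Gf s := by gcongr
  · calc t * gs / Gf s ≤ t * (gp * (Gf s / s) * d⁻¹) / Gf s := by gcongr
    _ = gp * (Gf s / s) * (t / d) / Gf s := by rw [div_eq_mul_inv t d]; ring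
    _ = gp * (Gf s / s) * (Af s / (hh s * c)) / Gf s := by rw [htd]
    _ ≤ gp * (Gf s / s) * (((ν - 1) / (ν - gp) * (s * hh s)) / (hh s * c)) / Gf s := by
          gcongr
    _ = ν * gp / (ν - gp) := by rw [hcdef]; field_simp

end Key

/-- Proposition 2.17(2): the Sobolev conjugate `G*(x,t) = G(x, N⁻¹(x,t))`,
written as `G*(x,t) = ∫₀^t g*(x,s) ds` with `g*(x,·)` the right derivative of
`G*(x,·)`, satisfies `1 < g*⁻ ≤ t·g*(x,t)/G*(x,t) ≤ g*⁺` with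
`g*⁻ = ng⁻/(n−g⁻)` and `g*⁺ = ng⁺/(n−g⁺)`. -/
theorem stmt_13 {n : ℕ} (hn : 2 ≤ n)
    (G g : EuclideanSpace ℝ (Fin n) → ℝ → ℝ)
    (hG : IsGenNFunction (Set.univ : Set (EuclideanSpace ℝ (Fin n))) G g)
    (gm gp : ℝ) (hgm : 1 < gm) (hgmp : gm ≤ gp) (hgpn : gp < n)
    (hG0 : ∀ᵐ x : EuclideanSpace ℝ (Fin n), ∀ t : ℝ, 0 < t →
      gm ≤ t * g x t / G x t ∧ t * g x t / G x t ≤ gp)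
    (F : ℝ) (hF : 1 ≤ F)
    (hG1 : ∀ᵐ x : EuclideanSpace ℝ (Fin n), F⁻¹ ≤ G x 1 ∧ G x 1 ≤ F)
    (Ginv : EuclideanSpace ℝ (Fin n) → ℝ → ℝ)
    (hGinv : ∀ᵐ x : EuclideanSpace ℝ (Fin n), ∀ t : ℝ, 0 ≤ t →
      0 ≤ Ginv x t ∧ G x (Ginv x t) = t ∧ Ginv x (G x t) = t)
    (hG2 : ∃ μ : ℝ, μ ∈ Set.Ioc (0:ℝ) 1 ∧
      ∀ (c : EuclideanSpace ℝ (Fin n)) (r : ℝ), 0 < r →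
        volume (Metric.ball c r) ≤ 1 →
        ∀ t : ℝ, 1 ≤ t → ENNReal.ofReal t ≤ (volume (Metric.ball c r))⁻¹ →
        ∀ᵐ x ∂(volume.restrict (Metric.ball c r)),
          ∀ᵐ y ∂(volume.restrict (Metric.ball c r)), μ * Ginv x t ≤ Ginv y t)
    (Ninv : EuclideanSpace ℝ (Fin n) → ℝ → ℝ)
    (hNinv : ∀ᵐ x : EuclideanSpace ℝ (Fin n), ∀ t : ℝ, 0 ≤ t →
      0 ≤ Ninv x t ∧ sobolevAux n G x (Ninv x t) = t ∧
      Ninv x (sobolevAux n G x t) = t)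
    (gstar : EuclideanSpace ℝ (Fin n) → ℝ → ℝ)
    (hgstar : ∀ᵐ x : EuclideanSpace ℝ (Fin n), ∀ t : ℝ, 0 ≤ t →
      HasDerivWithinAt (fun τ => G x (Ninv x τ)) (gstar x t) (Set.Ici t) t ∧
      G x (Ninv x t) = ∫ s in (0:ℝ)..t, gstar x s) :
    1 < (n : ℝ) * gm / ((n : ℝ) - gm) ∧
    ∀ᵐ x : EuclideanSpace ℝ (Fin n), ∀ t : ℝ, 0 < t →
      (n : ℝ) * gm / ((n : ℝ) - gm) ≤ t * gstar x t / G x (Ninv x t) ∧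
      t * gstar x t / G x (Ninv x t) ≤ (n : ℝ) * gp / ((n : ℝ) - gp) := by
  have hν : (2:ℝ) ≤ (n:ℝ) := by exact_mod_cast hn
  have hνgm : (0:ℝ) < (n:ℝ) - gm := by linarith
  constructor
  · rw [lt_div_iff₀ hνgm]
    nlinarith
  · have hprops := hG.ae_props
    rw [Measure.restrict_univ] at hprops
    filter_upwards [hprops, hG0, hNinv, hgstar] with x hx1 hx2 hx3 hx4
    intro t ht
    obtain ⟨_, Gc, _, _, _, Gpos, _, _, Grep, _, _, _, ggmono⟩ := hx1
    have rlo : ∀ s : ℝ, 0 < s → gm * G x s ≤ s * g x s := by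
      intro s hs
      have h := (hx2 s hs).1
      rw [le_div_iff₀ (Gpos s hs)] at h
      linarith
    have rhi : ∀ s : ℝ, 0 < s → s * g x s ≤ gp * G x s := by
      intro s hs
      have h := (hx2 s hs).2
      rw [div_le_iff₀ (Gpos s hs)] at h
      linarith
    exact key (n:ℝ) hν hgm hgmp hgpn Gc Gpos Grep ggmono rlo rhi
      (NN := sobolevAux n G x) (fun s => rfl) (hx3) ht ((hx4 t ht.le).1)
end
end
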